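/- arXiv:math/0402263 — 3 statements merged into one kernel-verified Lean document; each statement's English description precedes it below -/
import Mathlib

section
/- Every universal infinite distance matrix is almost universal. Moreover, there exists a proper infinite distance matrix that is almost universal but not universal. -/
/-- An infinite distance matrix. -/
def IsInfDistMatrix (r : ℕ → ℕ → ℝ) : Prop :=
  (∀ i, r i i = 0) ∧ (∀ i j, 0 ≤ r i j) ∧ (∀ i j, r i j = r j i) ∧
    ∀ i j k, r i k ≤ r i j + r j k

/-- A proper infinite distance matrix: no zeros off the diagonal. -/
def IsProper (r : ℕ → ℕ → ℝ) : Prop := ∀ i j, i ≠ j → 0 < r i j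

/-- A distance matrix of finite order `n`. -/
def IsDistMatrix {n : ℕ} (q : Fin n → Fin n → ℝ) : Prop :=
  (∀ i, q i i = 0) ∧ (∀ i j, 0 ≤ q i j) ∧ (∀ i j, q i j = q j i) ∧
    ∀ i j k, q i k ≤ q i j + q j k

/-- A universal infinite distance matrix. -/
def IsUniversal (r : ℕ → ℕ → ℝ) : Prop :=
  ∀ (n : ℕ) (a : Fin n → ℝ),
    (∀ i j : Fin n, |a i - a j| ≤ r i j ∧ r i j ≤ a i + a j) →
    ∀ ε > 0, ∃ m : ℕ, n ≤ m ∧ ∀ i : Fin n, |r i m - a i| < ε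

/-- An almost universal infinite distance matrix: every finite distance matrix is
approximated by some principal submatrix of `r`. -/
def IsAlmostUniversal (r : ℕ → ℕ → ℝ) : Prop :=
  ∀ (n : ℕ) (q : Fin n → Fin n → ℝ), IsDistMatrix q → ∀ ε > 0,
    ∃ k : Fin n → ℕ, Function.Injective k ∧ ∀ s t : Fin n, |r (k s) (k t) - q s t| < ε

theorem aux_part1 (r : ℕ → ℕ → ℝ) (hr : IsInfDistMatrix r) (hu : IsUniversal r) :
    IsAlmostUniversal r := by
  obtain ⟨hr0, hrnn, hrsym, hrtri⟩ := hr
  intro n q hq ε hε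
  obtain ⟨hq0, hqnn, hqsym, hqtri⟩ := hq
  suffices H : ∀ p : ℕ, ∀ hp : p ≤ n, ∀ δ : ℝ, 0 < δ →
      ∃ k : Fin p → ℕ, StrictMono k ∧
        ∀ s t : Fin p, |r (k s) (k t) - q (Fin.castLE hp s) (Fin.castLE hp t)| < δ by
    obtain ⟨k, hk, hkq⟩ := H n le_rfl ε hε
    refine ⟨k, hk.injective, fun s t => ?_⟩
    have := hkq s t
    have hs : Fin.castLE le_rfl s = s := rfl
    have ht : Fin.castLE le_rfl t = t := rfl
    rwa [hs, ht] at this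
  intro p
  induction p with
  | zero => exact fun _ δ hδ => ⟨Fin.elim0, fun s => s.elim0, fun s => s.elim0⟩
  | succ p ih =>
    intro hp δ hδ
    have hpp : p ≤ n := le_trans (Nat.le_succ p) hp
    have hδ3 : (0:ℝ) < δ/3 := by linarith
    obtain ⟨k, hmono, hk⟩ := ih hpp (δ/3) hδ3
    set pl : Fin n := Fin.castLE hp (Fin.last p) with hpl
    rcases Nat.eq_zero_or_pos p with hp0 | hp0
    · subst hp0
      refine ⟨fun _ => 0, fun a b hab => absurd hab (by omega), fun s t => ?_⟩
      have hst : s = t := by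
        have := s.isLt; have := t.isLt; exact Fin.ext (by omega)
      rw [hst, hr0, hq0]
      simpa using hδ
    · -- p ≥ 1
      have hne : Nonempty (Fin p) := ⟨⟨0, hp0⟩⟩
      set top : Fin p := ⟨p-1, by omega⟩ with htop
      set N : ℕ := k top + 1 with hN
      have hkN : ∀ s : Fin p, k s < N := by
        intro s
        have hs1 := s.isLt
        have : k s ≤ k top := hmono.monotone (Fin.le_def.mpr (by simp [htop]; omega))
        omega
      set c : Fin p → ℝ := fun s => q (Fin.castLE hpp s) pl + δ/3 with hc
      have hcnn : ∀ s, 0 ≤ c s := fun s => by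
        have := hqnn (Fin.castLE hpp s) pl; simp [hc]; linarith
      have hrq : ∀ s t : Fin p, r (k s) (k t) ≤ c s + c t := by
        intro s t
        have h1 := hk s t
        have h2 := hqtri (Fin.castLE hpp s) pl (Fin.castLE hpp t)
        have h3 := hqsym pl (Fin.castLE hpp t)
        have h4 := abs_lt.1 h1
        simp only [hc]
        linarith [h4.1, h4.2]
      set a : Fin N → ℝ := fun i =>
        Finset.univ.inf' (Finset.univ_nonempty) (fun s => r i (k s) + c s) with ha
      have hale : ∀ (i : Fin N) (s : Fin p), a i ≤ r i (k s) + c s := by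
        intro i s
        exact Finset.inf'_le _ (Finset.mem_univ s)
      have haex : ∀ i : Fin N, ∃ s : Fin p, a i = r i (k s) + c s := by
        intro i
        obtain ⟨s, _, hs⟩ := Finset.exists_mem_eq_inf' (Finset.univ_nonempty) (fun s => r (i:ℕ) (k s) + c s)
        exact ⟨s, hs⟩
      have hadm : ∀ i j : Fin N, |a i - a j| ≤ r i j ∧ r i j ≤ a i + a j := by
        intro i j
        constructor
        · rw [abs_sub_le_iff]
          constructor
          · obtain ⟨s, hs⟩ := haex j
            have h1 := hale i s
            have h2 := hrtri (i:ℕ) (j:ℕ) (k s)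
            linarith
          · obtain ⟨s, hs⟩ := haex i
            have h1 := hale j s
            have h2 := hrtri (j:ℕ) (i:ℕ) (k s)
            have h3 := hrsym (i:ℕ) (j:ℕ)
            linarith
        · obtain ⟨s, hs⟩ := haex i
          obtain ⟨t, ht⟩ := haex j
          have h1 := hrtri (i:ℕ) (k s) (j:ℕ)
          have h2 := hrtri (k s) (k t) (j:ℕ)
          have h3 := hrq s t
          have h4 := hrsym (k t) (j:ℕ)
          linarith
      obtain ⟨m, hmN, hma⟩ := hu N a hadm (δ/3) hδ3
      -- approximation of new distances
      have hnew : ∀ s : Fin p, |r (k s) m - q (Fin.castLE hpp s) pl| < δ/3 + δ/3 := by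
        intro s
        set i : Fin N := ⟨k s, hkN s⟩ with hi
        have h1 : |r (k s) m - a i| < δ/3 := hma i
        have h2 : |a i - q (Fin.castLE hpp s) pl| ≤ δ/3 := by
          rw [abs_sub_le_iff]
          constructor
          · have := hale i s
            rw [hi] at this
            simp only [hr0] at this
            simp only [hc] at this
            linarith
          · have hlb : q (Fin.castLE hpp s) pl ≤ a i := by
              apply Finset.le_inf'
              intro t _
              have h3 := (abs_lt.1 (hk s t)).1
              have h4 := hqtri (Fin.castLE hpp s) (Fin.castLE hpp t) pl
              simp only [hc]
              linarith
            linarith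
        calc |r (k s) m - q (Fin.castLE hpp s) pl|
            ≤ |r (k s) m - a i| + |a i - q (Fin.castLE hpp s) pl| := abs_sub_le _ _ _
          _ < δ/3 + δ/3 := by linarith
      refine ⟨fun s => if h : s.1 < p then k ⟨s.1, h⟩ else m, ?_, ?_⟩
      · intro s t hst
        beta_reduce
        have hst' : s.1 < t.1 := hst
        have hsl := s.isLt
        have htl := t.isLt
        by_cases hs : s.1 < p <;> by_cases ht : t.1 < p
        · rw [dif_pos hs, dif_pos ht]
          exact hmono (show (⟨s.1, hs⟩ : Fin p) < ⟨t.1, ht⟩ from Fin.mk_lt_mk.mpr hst')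
        · rw [dif_pos hs, dif_neg ht]
          exact lt_of_lt_of_le (hkN _) hmN
        · exfalso; omega
        · exfalso; omega
      · intro s t
        beta_reduce
        have hsl := s.isLt
        have htl := t.isLt
        by_cases hs : s.1 < p <;> by_cases ht : t.1 < p
        · rw [dif_pos hs, dif_pos ht]
          have h1 := hk ⟨s.1, hs⟩ ⟨t.1, ht⟩
          have hcs : Fin.castLE hpp ⟨s.1, hs⟩ = Fin.castLE hp s := rfl
          have hct : Fin.castLE hpp ⟨t.1, ht⟩ = Fin.castLE hp t := rfl
          rw [hcs, hct] at h1
          linarith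
        · rw [dif_pos hs, dif_neg ht]
          have h2 : Fin.castLE hp t = pl := by
            apply Fin.ext; simp [hpl]; omega
          rw [h2]
          have h1 := hnew ⟨s.1, hs⟩
          have hcs : Fin.castLE hpp ⟨s.1, hs⟩ = Fin.castLE hp s := rfl
          rw [hcs] at h1
          linarith
        · rw [dif_neg hs, dif_pos ht]
          have h2 : Fin.castLE hp s = pl := by
            apply Fin.ext; simp [hpl]; omega
          rw [h2, hrsym, hqsym]
          have h1 := hnew ⟨t.1, ht⟩
          have hct : Fin.castLE hpp ⟨t.1, ht⟩ = Fin.castLE hp t := rfl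
          rw [hct] at h1
          linarith
        · rw [dif_neg hs, dif_neg ht]
          have h2 : Fin.castLE hp s = pl := by apply Fin.ext; simp [hpl]; omega
          have h3 : Fin.castLE hp t = pl := by apply Fin.ext; simp [hpl]; omega
          rw [h2, h3, hr0, hq0]
          simpa using hδ

/-- The property of a rational matrix of being a proper distance matrix. -/
def RatGood {n : ℕ} (q : Fin n → Fin n → ℚ) : Prop :=
  (∀ i, q i i = 0) ∧ (∀ i j, 0 ≤ q i j) ∧ (∀ i j, q i j = q j i) ∧
    (∀ i j k, q i k ≤ q i j + q j k) ∧ (∀ i j, i ≠ j → 0 < q i j)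

open Classical in
noncomputable def chooseMat (j : ℕ) : Σ n : ℕ, Fin n → Fin n → ℝ :=
  match (Encodable.decode j : Option (Σ n : ℕ, Fin n → Fin n → ℚ)) with
  | none => ⟨1, fun _ _ => 0⟩
  | some ⟨n, q⟩ =>
    if RatGood q then ⟨n, fun a b => (q a b : ℝ)⟩ else ⟨1, fun _ _ => 0⟩

lemma trivMat_spec : IsDistMatrix (fun _ _ => (0:ℝ) : Fin 1 → Fin 1 → ℝ) ∧
    ∀ a b : Fin 1, a ≠ b → 0 < (fun _ _ => (0:ℝ)) a b := by
  refine ⟨⟨fun _ => rfl, fun _ _ => le_refl 0, fun _ _ => rfl, fun _ _ _ => by norm_num⟩, ?_⟩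
  intro a b hab
  exact absurd (Subsingleton.elim a b) hab

lemma chooseMat_spec (j : ℕ) : IsDistMatrix (chooseMat j).2 ∧
    ∀ a b, a ≠ b → 0 < (chooseMat j).2 a b := by
  unfold chooseMat
  cases hd : (Encodable.decode j : Option (Σ n : ℕ, Fin n → Fin n → ℚ)) with
  | none => exact trivMat_spec
  | some x =>
    obtain ⟨n, q⟩ := x
    dsimp only
    by_cases h : RatGood q
    · rw [if_pos h]
      dsimp only
      obtain ⟨h0, hnn, hsym, htri, hpos⟩ := h
      refine ⟨⟨fun i => by show ((q i i : ℝ)) = 0; exact_mod_cast h0 i,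
        fun i j => by show (0:ℝ) ≤ (q i j : ℝ); exact_mod_cast hnn i j,
        fun i j => by show ((q i j : ℝ)) = (q j i : ℝ); exact_mod_cast hsym i j,
        fun i j k => by show ((q i k : ℝ)) ≤ (q i j : ℝ) + (q j k : ℝ); exact_mod_cast htri i j k⟩,
        fun a b hab => by show (0:ℝ) < (q a b : ℝ); exact_mod_cast hpos a b hab⟩
    · rw [if_neg h]
      exact trivMat_spec

lemma chooseMat_surj {n : ℕ} (q : Fin n → Fin n → ℚ) (h : RatGood q) :
    ∃ j, chooseMat j = ⟨n, fun a b => (q a b : ℝ)⟩ := by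
  refine ⟨Encodable.encode (⟨n, q⟩ : Σ n : ℕ, Fin n → Fin n → ℚ), ?_⟩
  unfold chooseMat
  rw [Encodable.encodek]
  exact if_pos h

noncomputable def Dd (j : ℕ) : ℝ := 1 + ∑ s, ∑ t, (chooseMat j).2 s t

lemma Dd_ge_one (j : ℕ) : 1 ≤ Dd j := by
  have h := (chooseMat_spec j).1.2.1
  unfold Dd
  have : (0:ℝ) ≤ ∑ s, ∑ t, (chooseMat j).2 s t :=
    Finset.sum_nonneg fun s _ => Finset.sum_nonneg fun t _ => h s t
  linarith

lemma Dd_nonneg (j : ℕ) : 0 ≤ Dd j := le_trans zero_le_one (Dd_ge_one j)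

lemma entry_le_Dd (j : ℕ) (a b : Fin (chooseMat j).1) : (chooseMat j).2 a b ≤ Dd j := by
  have h := (chooseMat_spec j).1.2.1
  have h1 : (chooseMat j).2 a b ≤ ∑ t, (chooseMat j).2 a t :=
    Finset.single_le_sum (fun t _ => h a t) (Finset.mem_univ b)
  have h2 : ∑ t, (chooseMat j).2 a t ≤ ∑ s, ∑ t, (chooseMat j).2 s t :=
    Finset.single_le_sum (fun s _ => Finset.sum_nonneg fun t _ => h s t) (Finset.mem_univ a)
  unfold Dd
  linarith

noncomputable def Bb (j : ℕ) (a b : ℕ) : ℝ :=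
  if a = b then 0
  else if h : a < (chooseMat j).1 ∧ b < (chooseMat j).1
       then (chooseMat j).2 ⟨a, h.1⟩ ⟨b, h.2⟩ else Dd j

lemma Bb_self (j a : ℕ) : Bb j a a = 0 := if_pos rfl

lemma Bb_eq_entry {j a b : ℕ} (hab : a ≠ b) (h : a < (chooseMat j).1 ∧ b < (chooseMat j).1) :
    Bb j a b = (chooseMat j).2 ⟨a, h.1⟩ ⟨b, h.2⟩ := by
  unfold Bb; rw [if_neg hab, dif_pos h]

lemma Bb_eq_D {j a b : ℕ} (hab : a ≠ b) (h : ¬(a < (chooseMat j).1 ∧ b < (chooseMat j).1)) :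
    Bb j a b = Dd j := by
  unfold Bb; rw [if_neg hab, dif_neg h]

lemma Bb_nonneg (j a b : ℕ) : 0 ≤ Bb j a b := by
  unfold Bb
  split_ifs with h1 h2
  · exact le_refl 0
  · exact (chooseMat_spec j).1.2.1 _ _
  · exact Dd_nonneg j

lemma Bb_le_Dd (j a b : ℕ) : Bb j a b ≤ Dd j := by
  unfold Bb
  split_ifs with h1 h2
  · exact Dd_nonneg j
  · exact entry_le_Dd j _ _
  · exact le_refl _

lemma Bb_symm (j a b : ℕ) : Bb j a b = Bb j b a := by
  rcases eq_or_ne a b with rfl | hab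
  · rfl
  · unfold Bb
    rw [if_neg hab, if_neg (Ne.symm hab)]
    by_cases h : a < (chooseMat j).1 ∧ b < (chooseMat j).1
    · rw [dif_pos h, dif_pos (And.intro h.2 h.1)]
      exact (chooseMat_spec j).1.2.2.1 _ _
    · rw [dif_neg h, dif_neg (fun h' => h ⟨h'.2, h'.1⟩)]

lemma Bb_pos {j a b : ℕ} (hab : a ≠ b) : 0 < Bb j a b := by
  unfold Bb
  rw [if_neg hab]
  split_ifs with h
  · exact (chooseMat_spec j).2 _ _ (fun he => hab (by simpa [Fin.mk.injEq] using he))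
  · exact lt_of_lt_of_le zero_lt_one (Dd_ge_one j)

lemma Bb_tri (j a b c : ℕ) : Bb j a c ≤ Bb j a b + Bb j b c := by
  have htri := (chooseMat_spec j).1.2.2.2
  rcases eq_or_ne a c with rfl | hac
  · rw [Bb_self]
    exact add_nonneg (Bb_nonneg _ _ _) (Bb_nonneg _ _ _)
  rcases eq_or_ne a b with rfl | hab
  · rw [Bb_self]
    simp
  rcases eq_or_ne b c with rfl | hbc
  · rw [Bb_self]
    simp
  by_cases h1 : a < (chooseMat j).1 ∧ c < (chooseMat j).1
  · rw [Bb_eq_entry hac h1]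
    by_cases hb : b < (chooseMat j).1
    · rw [Bb_eq_entry hab ⟨h1.1, hb⟩, Bb_eq_entry hbc ⟨hb, h1.2⟩]
      exact htri _ _ _
    · rw [Bb_eq_D hab (fun h => hb h.2), Bb_eq_D hbc (fun h => hb h.1)]
      linarith [entry_le_Dd j ⟨a, h1.1⟩ ⟨c, h1.2⟩, Dd_nonneg j]
  · rw [Bb_eq_D hac h1]
    by_cases ha : a < (chooseMat j).1
    · have hc : ¬ c < (chooseMat j).1 := fun hc => h1 ⟨ha, hc⟩
      rw [Bb_eq_D hbc (fun h => hc h.2)]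
      linarith [Bb_nonneg j a b]
    · rw [Bb_eq_D hab (fun h => ha h.1)]
      linarith [Bb_nonneg j b c]

noncomputable def Ss (j : ℕ) : ℝ := 1 + 2 * ∑ i ∈ Finset.range (j+1), Dd i

lemma Ss_ge_one (j : ℕ) : 1 ≤ Ss j := by
  unfold Ss
  have : (0:ℝ) ≤ ∑ i ∈ Finset.range (j+1), Dd i :=
    Finset.sum_nonneg fun i _ => Dd_nonneg i
  linarith

lemma Ss_mono {j k : ℕ} (h : j ≤ k) : Ss j ≤ Ss k := by
  unfold Ss
  have : ∑ i ∈ Finset.range (j+1), Dd i ≤ ∑ i ∈ Finset.range (k+1), Dd i :=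
    Finset.sum_le_sum_of_subset_of_nonneg
      (Finset.range_subset_range.mpr (by omega)) (fun i _ _ => Dd_nonneg i)
  linarith

lemma Ss_ge (i j : ℕ) (h : i ≤ j) : 1 + 2 * Dd i ≤ Ss j := by
  unfold Ss
  have : Dd i ≤ ∑ x ∈ Finset.range (j+1), Dd x :=
    Finset.single_le_sum (fun x _ => Dd_nonneg x) (Finset.mem_range.mpr (by omega))
  linarith

noncomputable def rr (x y : ℕ) : ℝ :=
  if (Nat.unpair x).1 = (Nat.unpair y).1
  then Bb (Nat.unpair x).1 (Nat.unpair x).2 (Nat.unpair y).2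
  else Ss (max (Nat.unpair x).1 (Nat.unpair y).1)

lemma rr_self (x : ℕ) : rr x x = 0 := by
  unfold rr; rw [if_pos rfl, Bb_self]

lemma rr_nonneg (x y : ℕ) : 0 ≤ rr x y := by
  unfold rr
  split_ifs with h
  · exact Bb_nonneg _ _ _
  · linarith [Ss_ge_one (max (Nat.unpair x).1 (Nat.unpair y).1)]

lemma rr_symm (x y : ℕ) : rr x y = rr y x := by
  unfold rr
  rcases eq_or_ne (Nat.unpair x).1 (Nat.unpair y).1 with h | h
  · rw [if_pos h, if_pos h.symm, h, Bb_symm]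
  · rw [if_neg h, if_neg (Ne.symm h), max_comm]

lemma rr_pos {x y : ℕ} (hxy : x ≠ y) : 0 < rr x y := by
  unfold rr
  split_ifs with h
  · refine Bb_pos (fun h2 => hxy ?_)
    have hx := Nat.pair_unpair x
    have hy := Nat.pair_unpair y
    rw [← hx, ← hy, h, h2]
  · linarith [Ss_ge_one (max (Nat.unpair x).1 (Nat.unpair y).1)]

lemma rr_tri (x y z : ℕ) : rr x z ≤ rr x y + rr y z := by
  unfold rr
  set bx := (Nat.unpair x).1 with hbx
  set by' := (Nat.unpair y).1 with hby
  set bz := (Nat.unpair z).1 with hbz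
  by_cases hxy : bx = by' <;> by_cases hyz : by' = bz
  · have hxz : bx = bz := hxy.trans hyz
    rw [if_pos hxz, if_pos hxy, if_pos hyz, ← hxy]
    exact Bb_tri _ _ _ _
  · have hxz : bx ≠ bz := fun h => hyz (hxy ▸ h)
    rw [if_neg hxz, if_pos hxy, if_neg hyz, ← hxy]
    linarith [Bb_nonneg bx (Nat.unpair x).2 (Nat.unpair y).2]
  · have hxz : bx ≠ bz := fun h => hxy (h.trans hyz.symm)
    rw [if_neg hxz, if_neg hxy, if_pos hyz, hyz]
    linarith [Bb_nonneg bz (Nat.unpair y).2 (Nat.unpair z).2]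
  · by_cases hxz : bx = bz
    · rw [if_pos hxz, if_neg hxy, if_neg hyz]
      have h1 : Bb bx (Nat.unpair x).2 (Nat.unpair z).2 ≤ Dd bx := Bb_le_Dd _ _ _
      have h2 : 1 + 2 * Dd bx ≤ Ss (max bx by') := Ss_ge bx _ (le_max_left _ _)
      have h3 : (1:ℝ) ≤ Ss (max by' bz) := Ss_ge_one _
      have h4 : 0 ≤ Dd bx := Dd_nonneg bx
      linarith
    · rw [if_neg hxz, if_neg hxy, if_neg hyz]
      rcases le_total (max bx by') (max by' bz) with h | h
      · have h1 : Ss (max bx bz) ≤ Ss (max by' bz) := Ss_mono (by omega)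
        linarith [Ss_ge_one (max bx by')]
      · have h1 : Ss (max bx bz) ≤ Ss (max bx by') := Ss_mono (by omega)
        linarith [Ss_ge_one (max by' bz)]

lemma rr_inf : IsInfDistMatrix rr := ⟨rr_self, rr_nonneg, rr_symm, rr_tri⟩

lemma rr_proper : IsProper rr := fun i j hij => rr_pos hij

lemma ratApprox {n : ℕ} (q : Fin n → Fin n → ℝ) (hq : IsDistMatrix q) (ε : ℝ) (hε : 0 < ε) :
    ∃ q' : Fin n → Fin n → ℚ, RatGood q' ∧ ∀ s t, |(q' s t : ℝ) - q s t| < ε := by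
  obtain ⟨hq0, hqnn, hqsym, hqtri⟩ := hq
  have hg : ∀ s t : Fin n, ∃ x : ℚ, q s t + ε/2 < (x:ℝ) ∧ (x:ℝ) < q s t + ε := by
    intro s t
    exact exists_rat_btwn (by linarith)
  choose g hg1 hg2 using hg
  set q' : Fin n → Fin n → ℚ := fun s t => if s = t then 0 else g (min s t) (max s t) with hq'
  have hmm : ∀ s t : Fin n, q (min s t) (max s t) = q s t := by
    intro s t
    rcases le_total s t with h | h
    · rw [min_eq_left h, max_eq_right h]
    · rw [min_eq_right h, max_eq_left h, hqsym]
  have key : ∀ s t : Fin n, s ≠ t →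
      q s t + ε/2 < (q' s t : ℝ) ∧ (q' s t : ℝ) < q s t + ε := by
    intro s t hst
    have h1 := hg1 (min s t) (max s t)
    have h2 := hg2 (min s t) (max s t)
    rw [hmm] at h1 h2
    simp only [hq', if_neg hst]
    exact ⟨h1, h2⟩
  have hzero : ∀ s : Fin n, q' s s = 0 := fun s => if_pos rfl
  have hnn' : ∀ s t : Fin n, 0 ≤ q' s t := by
    intro s t
    rcases eq_or_ne s t with rfl | hst
    · rw [hzero]
    · have := (key s t hst).1
      have h2 := hqnn s t
      have : (0:ℝ) ≤ (q' s t : ℝ) := by linarith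
      exact_mod_cast this
  have hsym' : ∀ s t : Fin n, q' s t = q' t s := by
    intro s t
    rcases eq_or_ne s t with rfl | hst
    · rfl
    · simp only [hq', if_neg hst, if_neg (Ne.symm hst), min_comm, max_comm]
  have htri' : ∀ i j k : Fin n, q' i k ≤ q' i j + q' j k := by
    intro i j k
    rw [← Rat.cast_le (K := ℝ)]
    push_cast
    rcases eq_or_ne i k with hik | hik
    · rw [hik, hzero]
      push_cast
      have h1 : (0:ℝ) ≤ (q' k j : ℝ) := by exact_mod_cast hnn' k j
      have h2 : (0:ℝ) ≤ (q' j k : ℝ) := by exact_mod_cast hnn' j k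
      linarith
    rcases eq_or_ne j i with hji | hji
    · rw [hji, hzero]
      push_cast
      linarith
    rcases eq_or_ne j k with hjk | hjk
    · rw [hjk, hzero]
      push_cast
      linarith
    · have h1 := (key i k hik).2
      have h2 := (key i j (Ne.symm hji)).1
      have h3 := (key j k hjk).1
      have h4 := hqtri i j k
      linarith
  have hpos' : ∀ s t : Fin n, s ≠ t → 0 < q' s t := by
    intro s t hst
    have h1 := (key s t hst).1
    have h2 := hqnn s t
    have : (0:ℝ) < (q' s t : ℝ) := by linarith
    exact_mod_cast this
  refine ⟨q', ⟨hzero, hnn', hsym', htri', hpos'⟩, ?_⟩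
  intro s t
  rcases eq_or_ne s t with rfl | hst
  · rw [hzero, hq0]
    simpa using hε
  · have h1 := (key s t hst).1
    have h2 := (key s t hst).2
    rw [abs_lt]
    constructor <;> linarith

lemma Bb_of_eq {j n : ℕ} {Q : Fin n → Fin n → ℝ} (hj : chooseMat j = ⟨n, Q⟩) (a b : Fin n) :
    Bb j a.val b.val = if a = b then 0 else Q a b := by
  rcases eq_or_ne a b with rfl | hab
  · rw [Bb_self, if_pos rfl]
  · have hvab : a.val ≠ b.val := fun h => hab (Fin.ext h)
    rw [if_neg hab]
    unfold Bb
    rw [if_neg hvab]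
    have hgen : ∀ (x : Σ n : ℕ, Fin n → Fin n → ℝ), x = ⟨n, Q⟩ →
        (if h : a.val < x.1 ∧ b.val < x.1 then x.2 ⟨a.val, h.1⟩ ⟨b.val, h.2⟩ else Dd j) = Q a b := by
      rintro x rfl
      rw [dif_pos ⟨a.isLt, b.isLt⟩]
    exact hgen _ hj

lemma rr_almost : IsAlmostUniversal rr := by
  intro n q hq ε hε
  obtain ⟨q', hgood, happ⟩ := ratApprox q hq ε hε
  obtain ⟨j, hj⟩ := chooseMat_surj q' hgood
  refine ⟨fun s => Nat.pair j s.val, ?_, ?_⟩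
  · intro s t h
    have := (Nat.pair_eq_pair.mp h).2
    exact Fin.ext this
  · intro s t
    have hup : ∀ u : Fin n, Nat.unpair (Nat.pair j u.val) = (j, u.val) := fun u => Nat.unpair_pair _ _
    have : rr (Nat.pair j s.val) (Nat.pair j t.val) = Bb j s.val t.val := by
      unfold rr
      rw [hup s, hup t]
      simp
    rw [this, Bb_of_eq hj]
    rcases eq_or_ne s t with rfl | hst
    · rw [if_pos rfl, hq.1]
      simpa using hε
    · rw [if_neg hst]
      exact happ s t

lemma rr_not_universal : ¬ IsUniversal rr := by
  intro hu
  set a : Fin 1 → ℝ := fun _ => Dd 0 + 1/2 with ha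
  have hD := Dd_ge_one 0
  have hav : ∀ i : Fin 1, a i = Dd 0 + 1/2 := fun _ => rfl
  have hadm : ∀ i j : Fin 1, |a i - a j| ≤ rr i j ∧ rr i j ≤ a i + a j := by
    intro i j
    have hi : (i : ℕ) = 0 := by have := i.isLt; omega
    have hjj : (j : ℕ) = 0 := by have := j.isLt; omega
    rw [hi, hjj, rr_self]
    constructor
    · simp [hav]
    · show (0:ℝ) ≤ (Dd 0 + 1/2) + (Dd 0 + 1/2)
      linarith
  obtain ⟨m, hm1, hm⟩ := hu 1 a hadm (1/2) (by norm_num)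
  have h0 := hm 0
  have habs := abs_lt.mp h0
  rw [hav 0] at habs
  have hval : (((0 : Fin 1) : ℕ)) = 0 := rfl
  rw [hval] at habs
  by_cases hb : (Nat.unpair m).1 = 0
  · have hr : rr 0 m = Bb (Nat.unpair (0:ℕ)).1 (Nat.unpair (0:ℕ)).2 (Nat.unpair m).2 := by
      unfold rr
      rw [if_pos (show (Nat.unpair (0:ℕ)).1 = (Nat.unpair m).1 from hb.symm)]
    have hle : Bb (Nat.unpair (0:ℕ)).1 (Nat.unpair (0:ℕ)).2 (Nat.unpair m).2 ≤ Dd 0 :=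
      Bb_le_Dd 0 0 (Nat.unpair m).2
    rw [hr] at habs
    linarith [habs.2]
  · have hr : rr 0 m = Ss (max (Nat.unpair (0:ℕ)).1 (Nat.unpair m).1) := by
      unfold rr
      rw [if_neg (show ¬ (Nat.unpair (0:ℕ)).1 = (Nat.unpair m).1 from fun h => hb (by
        have : (Nat.unpair (0:ℕ)).1 = 0 := rfl
        omega))]
    have h2 : 1 + 2 * Dd 0 ≤ Ss (max (Nat.unpair (0:ℕ)).1 (Nat.unpair m).1) :=
      Ss_ge 0 _ (Nat.zero_le _)
    rw [hr] at habs
    linarith [habs.1, Dd_nonneg 0]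

/-- Every universal infinite distance matrix is almost universal; moreover there is a
proper infinite distance matrix that is almost universal but not universal. -/
theorem universal_implies_almostUniversal_and_exists_counterexample :
    (∀ r : ℕ → ℕ → ℝ, IsInfDistMatrix r → IsUniversal r → IsAlmostUniversal r) ∧
    ∃ r : ℕ → ℕ → ℝ, IsInfDistMatrix r ∧ IsProper r ∧
      IsAlmostUniversal r ∧ ¬ IsUniversal r := by
  exact ⟨fun r hr hu => aux_part1 r hr hu,
    rr, rr_inf, rr_proper, rr_almost, rr_not_universal⟩
end

section
/- An infinite distance matrix r is universal if and only if for every positive integer n, the orbit of r under the group of finitary permutations of ℕ that fix 0, 1, …, n-1 pointwise (acting by simultaneous permutations of rows and columns, σ·r = fun i j => r (σ⁻¹ i) (σ⁻¹ j)) is dense, in the product topology, in the set of all infinite distance matrices whose corner of order n coincides with that of r. A proper infinite distance matrix r is almost universal if and only if its orbit under the group of all finitary permutations of ℕ is dense in the cone R. -/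
/-- A finitary permutation of `ℕ`: it moves only finitely many elements. -/
def IsFinitary (σ : Equiv.Perm ℕ) : Prop := {x : ℕ | σ x ≠ x}.Finite

/-- The action of a permutation on matrices by simultaneous permutation of rows and
columns. -/
def permAct (σ : Equiv.Perm ℕ) (r : ℕ → ℕ → ℝ) : ℕ → ℕ → ℝ :=
  fun i j => r (σ⁻¹ i) (σ⁻¹ j)

/-! ### Auxiliary lemmas on finitary permutations -/

lemma finitary_one : IsFinitary 1 := by
  have : {x : ℕ | (1 : Equiv.Perm ℕ) x ≠ x} = ∅ := by
    ext x; simp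
  rw [IsFinitary, this]; exact Set.finite_empty

lemma finitary_swap (a b : ℕ) : IsFinitary (Equiv.swap a b) := by
  apply Set.Finite.subset (Set.finite_singleton a |>.insert b)
  intro x hx
  simp only [Set.mem_setOf_eq] at hx
  by_contra h
  simp only [Set.mem_insert_iff, Set.mem_singleton_iff, not_or] at h
  exact hx (Equiv.swap_apply_of_ne_of_ne h.2 h.1)

lemma finitary_mul {σ τ : Equiv.Perm ℕ} (hσ : IsFinitary σ) (hτ : IsFinitary τ) :
    IsFinitary (σ * τ) := by
  apply Set.Finite.subset (hσ.union hτ)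
  intro x hx
  simp only [Set.mem_setOf_eq, Equiv.Perm.mul_apply] at hx
  by_contra h
  simp only [Set.mem_union, Set.mem_setOf_eq, not_or, not_not] at h
  rw [h.2] at hx
  exact hx h.1

lemma finitary_inv {σ : Equiv.Perm ℕ} (hσ : IsFinitary σ) : IsFinitary σ⁻¹ := by
  have : {x : ℕ | σ⁻¹ x ≠ x} = {x : ℕ | σ x ≠ x} := by
    ext x
    simp only [Set.mem_setOf_eq, ne_eq, Equiv.Perm.inv_eq_iff_eq]
    rw [eq_comm]
  rw [IsFinitary, this]; exact hσ

/-- Any injection defined on an initial segment of `ℕ` extends to a finitary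
permutation. -/
lemma exists_finitary_extend (N : ℕ) (g : ℕ → ℕ)
    (hg : ∀ i j, i < N → j < N → g i = g j → i = j) :
    ∃ τ : Equiv.Perm ℕ, IsFinitary τ ∧ ∀ j < N, τ j = g j := by
  induction N with
  | zero => exact ⟨1, finitary_one, by omega⟩
  | succ N ih =>
    obtain ⟨τ, hτf, hτ⟩ := ih (fun i j hi hj h => hg i j (by omega) (by omega) h)
    refine ⟨Equiv.swap (τ N) (g N) * τ, finitary_mul (finitary_swap _ _) hτf, ?_⟩
    intro j hj
    rcases Nat.lt_or_ge j N with hjN | hjN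
    · have h1 : τ j = g j := hτ j hjN
      have h2 : g j ≠ τ N := by
        intro h
        have : τ j = τ N := by rw [h1, h]
        exact absurd (τ.injective this) (by omega)
      have h3 : g j ≠ g N := fun h => by
        have := hg j N (by omega) (by omega) h; omega
      simp only [Equiv.Perm.mul_apply, h1]
      exact Equiv.swap_apply_of_ne_of_ne h2 h3
    · have hjN' : j = N := by omega
      subst hjN'
      simp [Equiv.Perm.mul_apply, Equiv.swap_apply_left]

/-! ### Katetov-type extension functions -/

lemma katetov_exists (r : ℕ → ℕ → ℝ) (hr : IsInfDistMatrix r) (k : ℕ) (hk : 0 < k)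
    (g : ℕ → ℕ) (s : ℕ → ℝ) (hs0 : ∀ j, j < k → 0 ≤ s j)
    (hlow : ∀ j l, j < k → l < k → r (g j) (g l) ≤ s j + s l) :
    ∃ F : ℕ → ℝ, (∀ x, 0 ≤ F x) ∧ (∀ x j, j < k → F x ≤ s j + r x (g j)) ∧
      (∀ x v, (∀ j, j < k → v ≤ s j + r x (g j)) → v ≤ F x) ∧
      (∀ x y, F x ≤ F y + r x y) ∧ (∀ x y, r x y ≤ F x + F y) := by
  obtain ⟨hdiag, hnn, hsymm, htri⟩ := hr
  have hne : (Finset.range k).Nonempty := ⟨0, Finset.mem_range.mpr hk⟩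
  set F : ℕ → ℝ := fun x => (Finset.range k).inf' hne (fun j => s j + r x (g j)) with hF
  have hle : ∀ x j, j < k → F x ≤ s j + r x (g j) := by
    intro x j hj
    exact Finset.inf'_le _ (Finset.mem_range.mpr hj)
  have hge : ∀ x v, (∀ j, j < k → v ≤ s j + r x (g j)) → v ≤ F x := by
    intro x v hv
    exact Finset.le_inf' _ _ (fun j hj => hv j (Finset.mem_range.mp hj))
  have hmin : ∀ x, ∃ j, j < k ∧ F x = s j + r x (g j) := by
    intro x
    obtain ⟨j, hj, hj'⟩ := Finset.exists_mem_eq_inf' hne (fun j => s j + r x (g j))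
    exact ⟨j, Finset.mem_range.mp hj, hj'⟩
  refine ⟨F, ?_, hle, hge, ?_, ?_⟩
  · intro x
    exact hge x 0 (fun j hj => add_nonneg (hs0 j hj) (hnn _ _))
  · intro x y
    obtain ⟨j, hj, hjF⟩ := hmin y
    have : F x ≤ s j + r x (g j) := hle x j hj
    have h2 : r x (g j) ≤ r x y + r y (g j) := htri x y (g j)
    linarith
  · intro x y
    obtain ⟨j, hj, hjF⟩ := hmin x
    obtain ⟨l, hl, hlF⟩ := hmin y
    have h1 : r x y ≤ r x (g j) + r (g j) y := htri x (g j) y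
    have h2 : r (g j) y ≤ r (g j) (g l) + r (g l) y := htri (g j) (g l) y
    have h3 : r (g j) (g l) ≤ s j + s l := hlow j l hj hl
    have h4 : r (g l) y = r y (g l) := hsymm _ _
    linarith

/-! ### Closure in the product topology via finite corners -/

lemma mem_closure_of_corner_approx (S : Set (ℕ → ℕ → ℝ)) (r' : ℕ → ℕ → ℝ)
    (h : ∀ N : ℕ, ∀ ε : ℝ, 0 < ε → ∃ s ∈ S, ∀ i j, i < N → j < N → |s i j - r' i j| < ε) :
    r' ∈ closure S := by
  choose f hfS hf using fun N : ℕ => h N (1 / (N + 1)) (by positivity)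
  apply mem_closure_of_tendsto (x := r') (f := f) (b := Filter.atTop)
  · rw [tendsto_pi_nhds]
    intro i
    rw [tendsto_pi_nhds]
    intro j
    rw [Metric.tendsto_atTop]
    intro ε hε
    obtain ⟨K, hK⟩ := exists_nat_one_div_lt hε
    refine ⟨max (max i j + 1) K, fun N hN => ?_⟩
    have hi : i < N := by omega
    have hj : j < N := by omega
    have h1 : |f N i j - r' i j| < 1 / (N + 1) := hf N i j hi hj
    have h2 : (1 : ℝ) / (N + 1) ≤ 1 / (K + 1) := by
      apply one_div_le_one_div_of_le
      · positivity
      · have hKN : (K : ℝ) ≤ N := by exact_mod_cast (by omega : K ≤ N)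
        linarith
    rw [Real.dist_eq]
    linarith
  · exact Filter.Eventually.of_forall hfS

lemma exists_approx_of_mem_closure (S : Set (ℕ → ℕ → ℝ)) (r' : ℕ → ℕ → ℝ)
    (h : r' ∈ closure S) (N : ℕ) (ε : ℝ) (hε : 0 < ε) :
    ∃ s ∈ S, ∀ i j, i < N → j < N → |s i j - r' i j| < ε := by
  set U : Set (ℕ → ℕ → ℝ) := ⋂ (i : Fin N) (j : Fin N),
    (fun s : ℕ → ℕ → ℝ => s i j) ⁻¹' Metric.ball (r' i j) ε with hU
  have hUopen : IsOpen U := by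
    apply isOpen_iInter_of_finite
    intro i
    apply isOpen_iInter_of_finite
    intro j
    exact Metric.isOpen_ball.preimage ((continuous_apply (j : ℕ)).comp (continuous_apply (i : ℕ)))
  have hr'U : r' ∈ U := by
    simp only [hU, Set.mem_iInter, Set.mem_preimage, Metric.mem_ball, dist_self]
    intro i j
    simp [hε]
  obtain ⟨s, hsU, hsS⟩ := _root_.mem_closure_iff.mp h U hUopen hr'U
  refine ⟨s, hsS, fun i j hi hj => ?_⟩
  have := Set.mem_iInter.mp (Set.mem_iInter.mp hsU ⟨i, hi⟩) ⟨j, hj⟩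
  simpa [Real.dist_eq] using this

/-! ### The inductive construction for universal matrices -/

lemma univ_build (r : ℕ → ℕ → ℝ) (hr : IsInfDistMatrix r) (hu : IsUniversal r)
    (n : ℕ) (hn : 0 < n) (r' : ℕ → ℕ → ℝ) (hr' : IsInfDistMatrix r')
    (hc : ∀ i j, i < n → j < n → r' i j = r i j) (η : ℝ) (hη : 0 < η) :
    ∀ d : ℕ, ∃ g : ℕ → ℕ, (∀ i, i < n → g i = i) ∧
      (∀ i j, i < n + d → j < n + d → g i = g j → i = j) ∧
      (∀ i j, i < n + d → j < n + d → |r (g i) (g j) - r' i j| < η * 2 ^ d) := by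
  obtain ⟨hd', hnn', hsymm', htri'⟩ := hr'
  intro d
  induction d with
  | zero =>
    refine ⟨id, fun i _ => rfl, fun i j _ _ h => h, fun i j hi hj => ?_⟩
    rw [hc i j (by omega) (by omega)]
    simpa using hη
  | succ d ih =>
    obtain ⟨g, hgfix, hginj, hgapp⟩ := ih
    set B : ℝ := η * 2 ^ d with hBdef
    have hB : 0 < B := by positivity
    have hB2 : η * 2 ^ (d + 1) = 2 * B := by rw [hBdef, pow_succ]; ring
    set M : ℕ := (Finset.range (n + d)).sup g + 1 with hMdef
    have hgM : ∀ i, i < n + d → g i < M := by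
      intro i hi
      have := Finset.le_sup (f := g) (Finset.mem_range.mpr hi)
      omega
    have hMn : n ≤ M := by
      have h1 : g (n - 1) = n - 1 := hgfix _ (by omega)
      have := Finset.le_sup (f := g) (Finset.mem_range.mpr (show n - 1 < n + d by omega))
      omega
    set s : ℕ → ℝ := fun j => r' j (n + d) + B with hsdef
    obtain ⟨F, hF0, hFle, hFge, hFlip, hFlow⟩ := katetov_exists r hr (n + d) (by omega) g s
      (fun j _ => add_nonneg (hnn' _ _) hB.le)
      (by
        intro j l hj hl
        have h1 : |r (g j) (g l) - r' j l| < B := hgapp j l hj hl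
        have h2 : r' j l ≤ r' j (n + d) + r' (n + d) l := htri' j (n + d) l
        have h3 : r' (n + d) l = r' l (n + d) := hsymm' _ _
        rw [abs_sub_lt_iff] at h1
        simp only [hsdef]
        linarith [h1.1])
    have hadm : ∀ i j : Fin M, |F i - F j| ≤ r i j ∧ r i j ≤ F i + F j := by
      intro i j
      constructor
      · rw [abs_sub_le_iff]
        constructor
        · have := hFlip i j; linarith
        · have h1 := hFlip j i
          have h2 : r (j : ℕ) i = r (i : ℕ) j := hr.2.2.1 _ _
          linarith
      · exact hFlow _ _
    obtain ⟨m, hmM, hm⟩ := hu M (fun x => F x) hadm B hB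
    set g' : ℕ → ℕ := fun x => if x = n + d then m else g x with hg'def
    have hg'new : g' (n + d) = m := if_pos rfl
    have hg'old : ∀ x, x ≠ n + d → g' x = g x := fun x hx => if_neg hx
    refine ⟨g', ?_, ?_, ?_⟩
    · intro i hi
      rw [hg'old i (by omega)]
      exact hgfix i hi
    · intro i j hi hj h
      by_cases hin : i = n + d <;> by_cases hjn : j = n + d
      · omega
      · rw [hin, hg'new, hg'old j hjn] at h
        have := hgM j (by omega); omega
      · rw [hjn, hg'new, hg'old i hin] at h
        have := hgM i (by omega); omega
      · rw [hg'old i hin, hg'old j hjn] at h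
        exact hginj i j (by omega) (by omega) h
    · have key : ∀ i, i < n + d → |r (g i) m - r' i (n + d)| < 2 * B := by
        intro i hi
        have h1 : |r (g i) m - F (g i)| < B := hm ⟨g i, hgM i hi⟩
        have h2 : F (g i) ≤ r' i (n + d) + B := by
          have := hFle (g i) i hi
          rw [hr.1 (g i)] at this
          simp only [hsdef] at this
          linarith
        have h3 : r' i (n + d) ≤ F (g i) := by
          apply hFge
          intro j hj
          have h4 : |r (g i) (g j) - r' i j| < B := hgapp i j hi hj
          have h5 : r' i (n + d) ≤ r' i j + r' j (n + d) := htri' i j (n + d)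
          rw [abs_sub_lt_iff] at h4
          simp only [hsdef]
          linarith [h4.2]
        rw [abs_sub_lt_iff] at h1 ⊢
        constructor <;> linarith
      intro i j hi hj
      rw [hB2]
      by_cases hin : i = n + d <;> by_cases hjn : j = n + d
      · subst hin; subst hjn
        rw [hg'new, hr.1, hd']
        simpa using (by positivity : (0:ℝ) < 2 * B)
      · subst hin
        rw [hg'new, hg'old j hjn]
        have h1 : r m (g j) = r (g j) m := hr.2.2.1 _ _
        have h2 : r' (n + d) j = r' j (n + d) := hsymm' _ _
        rw [h1, h2]
        exact key j (by omega)
      · subst hjn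
        rw [hg'new, hg'old i hin]
        exact key i (by omega)
      · rw [hg'old i hin, hg'old j hjn]
        have := hgapp i j (by omega) (by omega)
        linarith

/-! ### The one-point extension matrix -/

/-- The matrix obtained by inserting a new point at index `n` with distance function `F`,
shifting later indices of `r` up by one. -/
def extMat (r : ℕ → ℕ → ℝ) (F : ℕ → ℝ) (n : ℕ) : ℕ → ℕ → ℝ := fun i j =>
  if i = n then (if j = n then 0 else F (if j < n then j else j - 1))
  else if j = n then F (if i < n then i else i - 1)
  else r (if i < n then i else i - 1) (if j < n then j else j - 1)

lemma extMat_nn (r : ℕ → ℕ → ℝ) (F : ℕ → ℝ) (n : ℕ) : extMat r F n n n = 0 := by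
  simp [extMat]

lemma extMat_nj (r : ℕ → ℕ → ℝ) (F : ℕ → ℝ) (n j : ℕ) (hj : j ≠ n) :
    extMat r F n n j = F (if j < n then j else j - 1) := by
  simp [extMat, hj]

lemma extMat_in (r : ℕ → ℕ → ℝ) (F : ℕ → ℝ) (n i : ℕ) (hi : i ≠ n) :
    extMat r F n i n = F (if i < n then i else i - 1) := by
  simp [extMat, hi]

lemma extMat_ij (r : ℕ → ℕ → ℝ) (F : ℕ → ℝ) (n i j : ℕ) (hi : i ≠ n) (hj : j ≠ n) :
    extMat r F n i j = r (if i < n then i else i - 1) (if j < n then j else j - 1) := by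
  simp [extMat, hi, hj]

lemma extMat_isInfDistMatrix (r : ℕ → ℕ → ℝ) (hr : IsInfDistMatrix r) (F : ℕ → ℝ) (n : ℕ)
    (hF0 : ∀ x, 0 ≤ F x) (hFlip : ∀ x y, F x ≤ F y + r x y)
    (hFlow : ∀ x y, r x y ≤ F x + F y) :
    IsInfDistMatrix (extMat r F n) := by
  obtain ⟨hdiag, hnn, hsymm, htri⟩ := hr
  refine ⟨?_, ?_, ?_, ?_⟩
  · intro i
    by_cases hi : i = n
    · subst i; exact extMat_nn r F n
    · rw [extMat_ij r F n i i hi hi]; exact hdiag _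
  · intro i j
    by_cases hi : i = n <;> by_cases hj : j = n
    · subst i; subst j; rw [extMat_nn]
    · subst i; rw [extMat_nj r F n j hj]; exact hF0 _
    · subst j; rw [extMat_in r F n i hi]; exact hF0 _
    · rw [extMat_ij r F n i j hi hj]; exact hnn _ _
  · intro i j
    by_cases hi : i = n <;> by_cases hj : j = n
    · subst i; subst j; rfl
    · subst i; rw [extMat_nj r F n j hj, extMat_in r F n j hj]
    · subst j; rw [extMat_in r F n i hi, extMat_nj r F n i hi]
    · rw [extMat_ij r F n i j hi hj, extMat_ij r F n j i hj hi]; exact hsymm _ _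
  · intro i j k
    by_cases hi : i = n <;> by_cases hj : j = n <;> by_cases hk : k = n
    · subst i; subst j; subst k
      rw [extMat_nn]; simp [extMat_nn]
    · subst i; subst j
      rw [extMat_nj r F n k hk, extMat_nn]; linarith
    · subst i; subst k
      rw [extMat_nn, extMat_nj r F n j hj, extMat_in r F n j hj]
      have := hF0 (if j < n then j else j - 1); linarith
    · subst i
      rw [extMat_nj r F n k hk, extMat_nj r F n j hj, extMat_ij r F n j k hj hk]
      have h1 := hFlip (if k < n then k else k - 1) (if j < n then j else j - 1)
      have h2 := hsymm (if k < n then k else k - 1) (if j < n then j else j - 1)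
      linarith
    · subst j; subst k
      rw [extMat_in r F n i hi, extMat_nn]; linarith
    · subst j
      rw [extMat_ij r F n i k hi hk, extMat_in r F n i hi, extMat_nj r F n k hk]
      exact hFlow _ _
    · subst k
      rw [extMat_in r F n i hi, extMat_ij r F n i j hi hj, extMat_in r F n j hj]
      have h1 := hFlip (if i < n then i else i - 1) (if j < n then j else j - 1)
      have h2 := hsymm (if i < n then i else i - 1) (if j < n then j else j - 1)
      linarith
    · rw [extMat_ij r F n i k hi hk, extMat_ij r F n i j hi hj,
        extMat_ij r F n j k hj hk]
      exact htri _ _ _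

/-! ### The four main implications -/

lemma part1_mp (r : ℕ → ℕ → ℝ) (hr : IsInfDistMatrix r) (hu : IsUniversal r)
    (n : ℕ) (hn : 0 < n) :
    {r' : ℕ → ℕ → ℝ | IsInfDistMatrix r' ∧ ∀ i j, i < n → j < n → r' i j = r i j} ⊆
      closure {r' : ℕ → ℕ → ℝ | ∃ σ : Equiv.Perm ℕ, IsFinitary σ ∧
        (∀ i < n, σ i = i) ∧ r' = permAct σ r} := by
  rintro r' ⟨hr', hc⟩
  apply mem_closure_of_corner_approx
  intro N0 ε hε
  set N : ℕ := max N0 n with hNdef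
  set d : ℕ := N - n with hddef
  have hnd : n + d = N := by omega
  have hpow : (0:ℝ) < 2 ^ d := by positivity
  obtain ⟨g, hgfix, hginj, hgapp⟩ := univ_build r hr hu n hn r' hr' hc
    (ε / 2 ^ d) (by positivity) d
  have happ : ∀ i j, i < N → j < N → |r (g i) (g j) - r' i j| < ε := by
    intro i j hi hj
    have h1 := hgapp i j (by omega) (by omega)
    have h2 : ε / 2 ^ d * 2 ^ d = ε := div_mul_cancel₀ ε (ne_of_gt hpow)
    linarith
  obtain ⟨τ, hτf, hτ⟩ := exists_finitary_extend N g
    (fun i j hi hj h => hginj i j (by omega) (by omega) h)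
  refine ⟨permAct τ⁻¹ r, ⟨τ⁻¹, finitary_inv hτf, ?_, rfl⟩, ?_⟩
  · intro i hi
    rw [Equiv.Perm.inv_eq_iff_eq]
    rw [hτ i (by omega), hgfix i hi]
  · intro i j hi hj
    have e : permAct τ⁻¹ r i j = r (g i) (g j) := by
      simp only [permAct, inv_inv]
      rw [hτ i (by omega), hτ j (by omega)]
    rw [e]
    exact happ i j (by omega) (by omega)

lemma part1_mpr (r : ℕ → ℕ → ℝ) (hr : IsInfDistMatrix r)
    (hdense : ∀ n : ℕ, 0 < n →
      {r' : ℕ → ℕ → ℝ | IsInfDistMatrix r' ∧ ∀ i j, i < n → j < n → r' i j = r i j} ⊆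
        closure {r' : ℕ → ℕ → ℝ | ∃ σ : Equiv.Perm ℕ, IsFinitary σ ∧
          (∀ i < n, σ i = i) ∧ r' = permAct σ r}) :
    IsUniversal r := by
  intro n a ha ε hε
  rcases Nat.eq_zero_or_pos n with h0 | hn
  · subst h0
    exact ⟨0, le_refl 0, fun i => i.elim0⟩
  have ha0 : ∀ i : Fin n, 0 ≤ a i := by
    intro i
    have h1 := (ha i i).2
    rw [hr.1] at h1
    linarith
  set A : ℕ → ℝ := fun x => if h : x < n then a ⟨x, h⟩ else 0 with hA
  have hAeq : ∀ (x : ℕ) (h : x < n), A x = a ⟨x, h⟩ := fun x h => dif_pos h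
  obtain ⟨F, hF0, hFle, hFge, hFlip, hFlow⟩ := katetov_exists r hr n hn id A
    (fun j hj => by rw [hAeq j hj]; exact ha0 _)
    (fun j l hj hl => by
      rw [hAeq j hj, hAeq l hl]
      exact (ha ⟨j, hj⟩ ⟨l, hl⟩).2)
  have hFa : ∀ i : Fin n, F i = a i := by
    intro i
    have h1 : F i ≤ a i := by
      have := hFle i i i.isLt
      rw [hAeq i i.isLt] at this
      simp only [id] at this
      rw [hr.1] at this
      simpa using this
    have h2 : a i ≤ F i := by
      apply hFge
      intro j hj
      rw [hAeq j hj]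
      have h3 := (ha i ⟨j, hj⟩).1
      rw [abs_sub_le_iff] at h3
      have := h3.1
      simp only [id]
      linarith
    linarith
  set r'' : ℕ → ℕ → ℝ := extMat r F n with hr''
  have hr''dist : IsInfDistMatrix r'' := extMat_isInfDistMatrix r hr F n hF0 hFlip hFlow
  have hr''corner : ∀ i j, i < n → j < n → r'' i j = r i j := by
    intro i j hi hj
    rw [hr'', extMat_ij r F n i j (by omega) (by omega), if_pos hi, if_pos hj]
  have hmem : r'' ∈ closure {r' : ℕ → ℕ → ℝ | ∃ σ : Equiv.Perm ℕ, IsFinitary σ ∧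
      (∀ i < n, σ i = i) ∧ r' = permAct σ r} := hdense n hn ⟨hr''dist, hr''corner⟩
  obtain ⟨smat, ⟨σ, hσf, hσfix, hseq⟩, happ⟩ :=
    exists_approx_of_mem_closure _ _ hmem (n + 1) ε hε
  set m : ℕ := σ⁻¹ n with hm
  have hmn : n ≤ m := by
    by_contra h
    push_neg at h
    have h1 : σ m = m := hσfix m h
    have h2 : σ m = n := Equiv.apply_symm_apply σ n
    omega
  refine ⟨m, hmn, fun i => ?_⟩
  have h1 : |smat i n - r'' i n| < ε := happ i n (by omega) (by omega)
  have h2 : smat i n = r i m := by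
    rw [hseq]
    show r (σ⁻¹ i) (σ⁻¹ n) = r i m
    have h3 : σ⁻¹ (i : ℕ) = i := by
      rw [Equiv.Perm.inv_eq_iff_eq, hσfix i i.isLt]
    rw [h3, ← hm]
  have h4 : r'' i n = a i := by
    rw [hr'', extMat_in r F n i (by omega), if_pos i.isLt]
    exact hFa i
  rw [h2, h4] at h1
  exact h1

lemma part2_mp (r : ℕ → ℕ → ℝ) (hr : IsInfDistMatrix r) (hAU : IsAlmostUniversal r) :
    {r' : ℕ → ℕ → ℝ | IsInfDistMatrix r'} ⊆
      closure {r' : ℕ → ℕ → ℝ | ∃ σ : Equiv.Perm ℕ, IsFinitary σ ∧ r' = permAct σ r} := by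
  intro r' hr'
  apply mem_closure_of_corner_approx
  intro N ε hε
  have hq : IsDistMatrix (fun s t : Fin N => r' s t) :=
    ⟨fun i => hr'.1 i, fun i j => hr'.2.1 i j, fun i j => hr'.2.2.1 i j,
      fun i j k => hr'.2.2.2 i j k⟩
  obtain ⟨k, hkinj, hk⟩ := hAU N (fun s t : Fin N => r' s t) hq ε hε
  set g : ℕ → ℕ := fun x => if h : x < N then k ⟨x, h⟩ else x with hg
  have hgeq : ∀ (x : ℕ) (h : x < N), g x = k ⟨x, h⟩ := fun x h => dif_pos h
  obtain ⟨τ, hτf, hτ⟩ := exists_finitary_extend N g (by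
    intro i j hi hj h
    rw [hgeq i hi, hgeq j hj] at h
    have := hkinj h
    exact congrArg Fin.val this)
  refine ⟨permAct τ⁻¹ r, ⟨τ⁻¹, finitary_inv hτf, rfl⟩, ?_⟩
  intro i j hi hj
  have e : permAct τ⁻¹ r i j = r (k ⟨i, hi⟩) (k ⟨j, hj⟩) := by
    simp only [permAct, inv_inv]
    rw [hτ i hi, hτ j hj, hgeq i hi, hgeq j hj]
  rw [e]
  exact hk ⟨i, hi⟩ ⟨j, hj⟩

lemma part2_mpr (r : ℕ → ℕ → ℝ) (hr : IsInfDistMatrix r)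
    (hdense : {r' : ℕ → ℕ → ℝ | IsInfDistMatrix r'} ⊆
      closure {r' : ℕ → ℕ → ℝ | ∃ σ : Equiv.Perm ℕ, IsFinitary σ ∧ r' = permAct σ r}) :
    IsAlmostUniversal r := by
  intro n q hq ε hε
  match n, q, hq with
  | 0, q, hq => exact ⟨Fin.elim0, fun a => a.elim0, fun s => s.elim0⟩
  | (m + 1), q, hq =>
    set cl : ℕ → Fin (m + 1) := fun x => ⟨min x m, by omega⟩ with hcl
    set r'' : ℕ → ℕ → ℝ := fun i j => q (cl i) (cl j) with hr''
    have hr''dist : IsInfDistMatrix r'' := by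
      exact ⟨fun i => hq.1 _, fun i j => hq.2.1 _ _, fun i j => hq.2.2.1 _ _,
        fun i j k => hq.2.2.2 _ _ _⟩
    obtain ⟨smat, ⟨σ, hσf, hseq⟩, happ⟩ :=
      exists_approx_of_mem_closure _ _ (hdense hr''dist) (m + 1) ε hε
    refine ⟨fun s => σ⁻¹ s, ?_, ?_⟩
    · intro s t h
      have h1 : (s : ℕ) = t := σ⁻¹.injective h
      exact Fin.val_injective h1
    · intro s t
      have h1 : |smat s t - r'' s t| < ε := happ s t s.isLt t.isLt
      have h2 : smat (s : ℕ) (t : ℕ) = r (σ⁻¹ s) (σ⁻¹ t) := by rw [hseq]; rfl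
      have h3 : r'' (s : ℕ) (t : ℕ) = q s t := by
        rw [hr'']
        show q (cl s) (cl t) = q s t
        have e1 : cl (s : ℕ) = s := by
          rw [hcl]; exact Fin.ext (by simp [Nat.min_eq_left (by omega : (s:ℕ) ≤ m)])
        have e2 : cl (t : ℕ) = t := by
          rw [hcl]; exact Fin.ext (by simp [Nat.min_eq_left (by omega : (t:ℕ) ≤ m)])
        rw [e1, e2]
      rw [h2, h3] at h1
      exact h1

/-- Group-theoretic universality criterion: `r` is universal iff for every `n ≥ 1` its
orbit under finitary permutations fixing `0, …, n-1` is dense (product topology) in the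
set of distance matrices with the same order-`n` corner; a proper `r` is almost universal
iff its orbit under all finitary permutations is dense in the cone `R`. -/
theorem universality_orbit_criterion :
    (∀ r : ℕ → ℕ → ℝ, IsInfDistMatrix r →
      (IsUniversal r ↔ ∀ n : ℕ, 0 < n →
        {r' : ℕ → ℕ → ℝ | IsInfDistMatrix r' ∧ ∀ i j, i < n → j < n → r' i j = r i j} ⊆
          closure {r' : ℕ → ℕ → ℝ | ∃ σ : Equiv.Perm ℕ, IsFinitary σ ∧
            (∀ i < n, σ i = i) ∧ r' = permAct σ r})) ∧
    (∀ r : ℕ → ℕ → ℝ, IsInfDistMatrix r → IsProper r →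
      (IsAlmostUniversal r ↔
        {r' : ℕ → ℕ → ℝ | IsInfDistMatrix r'} ⊆
          closure {r' : ℕ → ℕ → ℝ | ∃ σ : Equiv.Perm ℕ, IsFinitary σ ∧ r' = permAct σ r})) := by
  constructor
  · intro r hrd
    exact ⟨fun hu n hn => part1_mp r hrd hu n hn, fun hd => part1_mpr r hrd hd⟩
  · intro r hrd _
    exact ⟨fun hAU => part2_mp r hrd hAU, fun hd => part2_mpr r hrd hd⟩
end

section
/- In the space of Borel probability measures on the cone R of infinite distance matrices, equipped with the topology of weak convergence, the set of measures μ with μ(M) = 1, where M is the set of universal distance matrices, is an everywhere dense G_δ set. Consequently, for the generic Borel probability measure ν on R, ν-almost every distance matrix is universal. -/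
open MeasureTheory Set Metric
open scoped ENNReal NNReal

/-- The cone of infinite distance matrices, as a subset of `ℕ → ℕ → ℝ` with the product
(weak) topology; it is a Polish space. -/
def ConeR : Set (ℕ → ℕ → ℝ) := {r | IsInfDistMatrix r}

/-- The set `M` of universal matrices, as a subset of the cone `R`. -/
def UnivSet : Set ConeR := {x | IsUniversal x.1}

/-! ### Measure-theoretic lemmas -/

section MeasureLemmas

variable {X : Type*} [MeasurableSpace X] [PseudoMetricSpace X] [OpensMeasurableSpace X]

lemma isOpen_gt_measure (c : ℝ≥0∞) {V : Set X} (hV : IsOpen V) :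
    IsOpen {μ : ProbabilityMeasure X | c < μ.toMeasure V} := by
  rw [isOpen_iff_mem_nhds]
  intro P hP
  simp only [Set.mem_setOf_eq] at hP
  have hsub : (0:ℝ≥0∞) < P.toMeasure V - c := tsub_pos_of_lt hP
  filter_upwards [P.toMeasure_add_pos_gt_mem_nhds hV hsub] with Q hQ
  by_contra hcon
  push_neg at hcon
  have hQ' : P.toMeasure V < P.toMeasure V := by
    refine hQ.trans_le ?_
    calc Q.toMeasure V + (P.toMeasure V - c)
        ≤ c + (P.toMeasure V - c) := add_le_add_left hcon _
      _ = P.toMeasure V := add_tsub_cancel_of_le hP.le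
  exact lt_irrefl _ hQ'

lemma isGδ_fullMeasure_iInter {ι : Type*} [Countable ι] (U : ι → Set X)
    (hU : ∀ i, IsOpen (U i)) :
    IsGδ {μ : ProbabilityMeasure X | μ.toMeasure (⋂ i, U i) = 1} := by
  have hmeq : {μ : ProbabilityMeasure X | μ.toMeasure (⋂ i, U i) = 1}
      = ⋂ (i : ι) (k : ℕ), {μ : ProbabilityMeasure X |
          (1 - (((k:ℝ≥0∞)+1))⁻¹ : ℝ≥0∞) < μ.toMeasure (U i)} := by
    ext μ
    simp only [Set.mem_setOf_eq, Set.mem_iInter]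
    constructor
    · intro h i k
      have h1 : μ.toMeasure (U i) = 1 :=
        le_antisymm prob_le_one (h ▸ measure_mono (Set.iInter_subset U i))
      rw [h1]
      exact ENNReal.sub_lt_self ENNReal.one_ne_top one_ne_zero
        (ENNReal.inv_ne_zero.mpr
          (ENNReal.add_ne_top.mpr ⟨ENNReal.natCast_ne_top k, ENNReal.one_ne_top⟩))
    · intro h
      have hUi : ∀ i, μ.toMeasure (U i) = 1 := by
        intro i
        refine le_antisymm prob_le_one ?_
        refine ENNReal.le_of_forall_pos_le_add fun ε hε _ => ?_
        obtain ⟨k, hk⟩ := ENNReal.exists_inv_nat_lt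
          (show ((ε:ℝ≥0∞)) ≠ 0 by exact_mod_cast hε.ne')
        have hksucc : ((k:ℝ≥0∞)+1)⁻¹ ≤ (k:ℝ≥0∞)⁻¹ := by
          gcongr
          exact le_self_add
        have hle1 : ((k:ℝ≥0∞)+1)⁻¹ ≤ 1 := by
          rw [ENNReal.inv_le_one]
          exact le_add_self
        calc (1:ℝ≥0∞) = (1 - ((k:ℝ≥0∞)+1)⁻¹) + ((k:ℝ≥0∞)+1)⁻¹ :=
              (tsub_add_cancel_of_le hle1).symm
          _ ≤ μ.toMeasure (U i) + ε :=
              add_le_add (h i k).le (hksucc.trans hk.le)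
      have hcompl : μ.toMeasure (⋂ i, U i)ᶜ = 0 := by
        rw [Set.compl_iInter]
        refine measure_iUnion_null fun i => ?_
        exact (prob_compl_eq_zero_iff ((hU i).measurableSet)).mpr (hUi i)
      exact (prob_compl_eq_zero_iff
        (MeasurableSet.iInter fun i => (hU i).measurableSet)).mp hcompl
  rw [hmeq]
  exact IsGδ.iInter fun i => IsGδ.iInter fun k =>
    (isOpen_gt_measure _ (hU i)).isGδ

lemma dense_fullMeasure [TopologicalSpace.SeparableSpace X] {M : Set X}
    (hM : MeasurableSet M) (hd : Dense M) :
    Dense {μ : ProbabilityMeasure X | μ.toMeasure M = 1} := by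
  rcases isEmpty_or_nonempty X with hemp | hne
  · haveI : IsEmpty (ProbabilityMeasure X) := ⟨fun μ => by
      have h1 := measure_univ (μ := μ.toMeasure)
      rw [Set.univ_eq_empty_iff.mpr hemp, measure_empty] at h1
      exact zero_ne_one h1⟩
    intro x
    exact (IsEmpty.false x).elim
  · have key : ∀ (μ : ProbabilityMeasure X) (ε : ℝ), 0 < ε →
        ∃ ν : ProbabilityMeasure X, ν.toMeasure M = 1 ∧
          levyProkhorovDist ν.toMeasure μ.toMeasure ≤ ε := by
      intro μ ε hε
      classical
      obtain ⟨As, As_mble, As_bdd, As_diam, As_cover, -⟩ :=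
        SeparableSpace.exists_measurable_partition_diam_le X (half_pos hε)
      have hcov : ∀ x : X, ∃ n, x ∈ As n := fun x =>
        Set.mem_iUnion.mp (As_cover ▸ Set.mem_univ x)
      have hpick : ∀ n : ℕ, ∃ y, y ∈ M ∧ ∀ x ∈ As n, dist x y ≤ ε := by
        intro n
        rcases (As n).eq_empty_or_nonempty with he | ⟨z, hz⟩
        · obtain ⟨y, hy⟩ := hd.nonempty
          exact ⟨y, hy, fun x hx => absurd (he ▸ hx) (Set.notMem_empty x)⟩
        · obtain ⟨y, hyb, hyM⟩ := Metric.dense_iff.mp hd z (ε/2) (half_pos hε)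
          refine ⟨y, hyM, fun x hx => ?_⟩
          calc dist x y ≤ dist x z + dist z y := dist_triangle _ _ _
            _ ≤ ε/2 + ε/2 := by
                refine add_le_add
                  (Metric.dist_le_diam_of_mem (As_bdd n) hx hz |>.trans (As_diam n)) ?_
                rw [dist_comm]
                exact (Metric.mem_ball.mp hyb).le
            _ = ε := add_halves ε
      choose f hfM hf using hpick
      set T : X → X := fun x => f (Nat.find (hcov x)) with hTdef
      have hTM : ∀ x, T x ∈ M := fun x => hfM _
      have hTd : ∀ x, dist x (T x) ≤ ε := fun x => hf _ x (Nat.find_spec (hcov x))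
      have hTm : Measurable T := by
        have hix : Measurable fun x => Nat.find (hcov x) := by
          apply measurable_to_countable'
          intro n
          have hpre : (fun x => Nat.find (hcov x)) ⁻¹' {n}
              = As n \ ⋃ (m : ℕ) (_ : m < n), As m := by
            ext x
            simp only [Set.mem_preimage, Set.mem_singleton_iff, Set.mem_diff,
              Set.mem_iUnion, not_exists]
            constructor
            · intro hfind
              refine ⟨hfind ▸ Nat.find_spec (hcov x), fun m hm hxm => ?_⟩
              exact Nat.find_min (hcov x) (hfind ▸ hm) hxm
            · rintro ⟨h1, h2⟩
              refine le_antisymm (Nat.find_le h1) ?_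
              by_contra hlt
              push_neg at hlt
              exact h2 _ hlt (Nat.find_spec (hcov x))
          rw [hpre]
          exact (As_mble n).diff
            (MeasurableSet.iUnion fun m => MeasurableSet.iUnion fun _ => As_mble m)
        exact measurable_from_top.comp hix
      refine ⟨μ.map hTm.aemeasurable, ?_, ?_⟩
      · rw [ProbabilityMeasure.toMeasure_map, Measure.map_apply hTm hM]
        refine le_antisymm prob_le_one ?_
        calc (1:ℝ≥0∞) = μ.toMeasure Set.univ := measure_univ.symm
          _ ≤ μ.toMeasure (T ⁻¹' M) := measure_mono fun x _ => hTM x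
      · refine levyProkhorovDist_le_of_forall_le _ _ hε.le fun ε' B hε' hB => ?_
        rw [ProbabilityMeasure.toMeasure_map, Measure.map_apply hTm hB]
        have hsub : T ⁻¹' B ⊆ Metric.thickening ε' B := fun x hx =>
          Metric.mem_thickening_iff.mpr ⟨T x, hx, lt_of_le_of_lt (hTd x) hε'⟩
        calc μ.toMeasure (T ⁻¹' B) ≤ μ.toMeasure (Metric.thickening ε' B) :=
              measure_mono hsub
          _ ≤ _ := le_self_add
    set S := {μ : ProbabilityMeasure X | μ.toMeasure M = 1} with hS
    let h := LevyProkhorov.probabilityMeasureHomeomorph (Ω := X)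
    have hLP : Dense (⇑h '' S) := by
      rw [Metric.dense_iff]
      intro x r hr
      obtain ⟨ν, hν1, hν2⟩ := key (h.symm x) (r/2) (half_pos hr)
      refine ⟨h ν, ?_, Set.mem_image_of_mem _ hν1⟩
      rw [Metric.mem_ball,
        show dist (h ν) x = levyProkhorovDist ν.toMeasure (h.symm x).toMeasure from
          LevyProkhorov.dist_probabilityMeasure_def _ _]
      exact hν2.trans_lt (by linarith)
    have hD : Dense (⇑h.symm '' (⇑h '' S)) :=
      (h.symm.surjective.denseRange).dense_image h.symm.continuous hLP
    have himg : ⇑h.symm '' (⇑h '' S) = S := by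
      rw [← Set.image_comp]
      simp [Set.image_id']
    rwa [himg] at hD

end MeasureLemmas

/-! ### Rational approximation of admissible vectors -/

lemma exists_rat_admissible {r : ℕ → ℕ → ℝ} (hr : IsInfDistMatrix r)
    {n : ℕ} {a : Fin n → ℝ}
    (ha : ∀ i j : Fin n, |a i - a j| ≤ r i j ∧ r i j ≤ a i + a j) {ε : ℝ} (hε : 0 < ε) :
    ∃ q : Fin n → ℚ,
      (∀ i j : Fin n, |(q i : ℝ) - (q j : ℝ)| ≤ r i j ∧ r i j ≤ (q i : ℝ) + (q j : ℝ)) ∧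
      ∀ i, |(q i : ℝ) - a i| < ε := by
  rcases Nat.eq_zero_or_pos n with hn | hn
  · subst hn
    exact ⟨finZeroElim, fun i => i.elim0, fun i => i.elim0⟩
  haveI : Nonempty (Fin n) := Fin.pos_iff_nonempty.mp hn
  obtain ⟨hd0, hdnn, hdsym, hdtri⟩ := hr
  have hann : ∀ i : Fin n, 0 ≤ a i := fun i => by
    have h2 := (ha i i).2
    rw [hd0] at h2
    linarith
  set B := Finset.univ.sup' Finset.univ_nonempty a with hB
  have haB : ∀ i, a i ≤ B := fun i => Finset.le_sup' a (Finset.mem_univ i)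
  have hB0 : 0 ≤ B := le_trans (hann (Classical.arbitrary _)) (haB _)
  set t := min (ε / (8 * (B + 1))) (1/2) with ht
  have ht0 : 0 < t := lt_min (by positivity) (by norm_num)
  have ht2 : t ≤ 1/2 := min_le_right _ _
  have htB : ∀ i, t * a i ≤ ε / 8 := by
    intro i
    calc t * a i ≤ (ε / (8 * (B + 1))) * (B+1) := by
          apply mul_le_mul (min_le_left _ _) (by linarith [haB i]) (hann i) (by positivity)
      _ = ε / 8 := by field_simp
  set g : Fin n × Fin n → ℝ := fun p => if r p.1 p.2 ≤ 0 then 1 else min 1 (r p.1 p.2) with hg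
  set s := Finset.univ.inf' Finset.univ_nonempty g with hs
  have hs0 : 0 < s := by
    rw [hs, Finset.lt_inf'_iff]
    intro p _
    by_cases hp : r p.1 p.2 ≤ 0
    · simp [hg, hp]
    · simp only [hg, if_neg hp]
      exact lt_min one_pos (lt_of_not_ge hp)
  have hsle : ∀ i j : Fin n, 0 < r ↑i ↑j → s ≤ r ↑i ↑j := by
    intro i j hij
    have h1 : s ≤ g (i, j) := Finset.inf'_le g (Finset.mem_univ _)
    simp only [hg, if_neg (not_le.mpr hij)] at h1
    exact h1.trans (min_le_right _ _)
  obtain ⟨η, hη0, hηlt⟩ := exists_rat_btwn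
    (show (0:ℝ) < min (t*s) (ε/8) from lt_min (by positivity) (by positivity))
  have hη0' : (0:ℝ) < (η:ℝ) := hη0
  have hηts : (η:ℝ) < t * s := hηlt.trans_le (min_le_left _ _)
  have hηε : (η:ℝ) < ε/8 := hηlt.trans_le (min_le_right _ _)
  set b : Fin n → ℝ := fun i => (1 - t) * a i + ε/2 with hb
  set q : Fin n → ℚ := fun i => η * (⌈ b i / (η:ℝ) ⌉ : ℤ) with hq
  have hqcast : ∀ i, (q i : ℝ) = (η:ℝ) * ((⌈ b i / (η:ℝ) ⌉ : ℤ) : ℝ) := by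
    intro i
    simp only [hq]
    push_cast
    ring
  have hqb : ∀ i, b i ≤ (q i : ℝ) ∧ (q i : ℝ) < b i + η := by
    intro i
    have h1 : b i / (η:ℝ) ≤ ((⌈ b i / (η:ℝ) ⌉ : ℤ) : ℝ) := Int.le_ceil _
    have h2 : ((⌈ b i / (η:ℝ) ⌉ : ℤ) : ℝ) < b i / (η:ℝ) + 1 := Int.ceil_lt_add_one _
    have hmul : (η:ℝ) * (b i / (η:ℝ)) = b i := by field_simp
    constructor
    · rw [hqcast i]
      calc b i = (η:ℝ) * (b i / (η:ℝ)) := hmul.symm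
        _ ≤ (η:ℝ) * ((⌈ b i / (η:ℝ) ⌉ : ℤ) : ℝ) := by
            exact mul_le_mul_of_nonneg_left h1 hη0'.le
    · rw [hqcast i]
      calc (η:ℝ) * ((⌈ b i / (η:ℝ) ⌉ : ℤ) : ℝ) < (η:ℝ) * (b i / (η:ℝ) + 1) := by
            exact mul_lt_mul_of_pos_left h2 hη0'
        _ = b i + η := by
            rw [mul_add, hmul]
            ring
  have hqeq : ∀ i j : Fin n, a i = a j → q i = q j := fun i j h => by
    simp only [hq, hb, h]
  have hbsub : ∀ i j : Fin n, b i - b j = (1-t)*(a i - a j) := fun i j => by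
    simp only [hb]
    ring
  have hbexp : ∀ i : Fin n, b i = a i - t * a i + ε/2 := fun i => by
    simp only [hb]
    ring
  clear_value B t g s b q
  refine ⟨q, fun i j => ⟨?_, ?_⟩, ?_⟩
  · rcases le_or_gt (r ↑i ↑j) 0 with hr0 | hrpos
    · have hrij : r ↑i ↑j = 0 := le_antisymm hr0 (hdnn _ _)
      have haij : a i = a j := by
        have h1 := (ha i j).1
        rw [hrij] at h1
        have h2 : a i - a j = 0 := abs_nonpos_iff.mp h1
        linarith
      have hqij : q i = q j := hqeq i j haij
      rw [hqij, hrij]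
      simp
    · have h1 := hqb i
      have h2 := hqb j
      have hΔ : |b i - b j| ≤ (1 - t) * (r ↑i ↑j) := by
        rw [hbsub i j, abs_mul, abs_of_nonneg (by linarith : (0:ℝ) ≤ 1 - t)]
        exact mul_le_mul_of_nonneg_left (ha i j).1 (by linarith)
      have hη_r : (η:ℝ) ≤ t * r ↑i ↑j :=
        le_trans hηts.le (mul_le_mul_of_nonneg_left (hsle i j hrpos) ht0.le)
      have e1 : b i - b j ≤ |b i - b j| := le_abs_self _
      have e2 : b j - b i ≤ |b i - b j| := by
        rw [abs_sub_comm]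
        exact le_abs_self _
      rw [abs_sub_le_iff]
      constructor <;> nlinarith [h1.1, h1.2, h2.1, h2.2]
  · have h1 := (hqb i).1
    have h2 := (hqb j).1
    have h3 := htB i
    have h4 := htB j
    have h5 := (ha i j).2
    have hbi := hbexp i
    have hbj := hbexp j
    linarith
  · intro i
    have h1 := hqb i
    have hbi := hbexp i
    have h3 := htB i
    have h5 : 0 ≤ t * a i := mul_nonneg ht0.le (hann i)
    rw [abs_sub_lt_iff]
    constructor <;> linarith [h1.1, h1.2, hηε]


/-! ### The set of universal matrices is Gδ -/

/-- The basic open sets whose intersection is `UnivSet`. -/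
def GSet (n : ℕ) (q : Fin n → ℚ) (k : ℕ) : Set ConeR :=
  {x : ConeR |
    (∀ i j : Fin n, |(q i : ℝ) - (q j : ℝ)| ≤ x.1 ↑i ↑j ∧ x.1 ↑i ↑j ≤ (q i : ℝ) + (q j : ℝ)) →
    ∃ m : ℕ, n ≤ m ∧ ∀ i : Fin n, |x.1 ↑i m - (q i : ℝ)| < ((k:ℝ)+1)⁻¹}

lemma isOpen_GSet (n : ℕ) (q : Fin n → ℚ) (k : ℕ) : IsOpen (GSet n q k) := by
  have hev : ∀ i j : ℕ, Continuous fun x : ConeR => x.1 i j := fun i j => by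
    exact (continuous_apply j).comp ((continuous_apply i).comp continuous_subtype_val)
  have hG : GSet n q k =
      (⋂ (i : Fin n) (j : Fin n), {x : ConeR |
          |(q i : ℝ) - (q j : ℝ)| ≤ x.1 ↑i ↑j ∧ x.1 ↑i ↑j ≤ (q i : ℝ) + (q j : ℝ)})ᶜ
      ∪ ⋃ (m : ℕ) (_ : n ≤ m), ⋂ (i : Fin n),
          {x : ConeR | |x.1 ↑i m - (q i : ℝ)| < ((k:ℝ)+1)⁻¹} := by
    ext x
    simp only [GSet, Set.mem_setOf_eq, Set.mem_union, Set.mem_compl_iff, Set.mem_iInter,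
      Set.mem_iUnion, exists_prop]
    tauto
  rw [hG]
  apply IsOpen.union
  · rw [isOpen_compl_iff]
    refine isClosed_iInter fun i => isClosed_iInter fun j => ?_
    rw [Set.setOf_and]
    exact IsClosed.inter (isClosed_le continuous_const (hev ↑i ↑j))
      (isClosed_le (hev ↑i ↑j) continuous_const)
  · exact isOpen_iUnion fun m => isOpen_iUnion fun _ =>
      isOpen_iInter_of_finite fun i =>
        IsOpen.preimage (((hev i m).sub continuous_const).abs) isOpen_Iio

/-- `UnivSet` as a countable intersection of the open sets `GSet`. -/
lemma univSet_eq : UnivSet =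
    ⋂ p : (Σ n : ℕ, Fin n → ℚ) × ℕ, GSet p.1.1 p.1.2 p.2 := by
  ext x
  simp only [UnivSet, Set.mem_setOf_eq, Set.mem_iInter]
  constructor
  · rintro hx ⟨⟨n, q⟩, k⟩ hadm
    exact hx n (fun i => (q i : ℝ)) hadm _ (by positivity)
  · intro hx n a ha ε hε
    obtain ⟨k, hk⟩ := exists_nat_one_div_lt (half_pos hε)
    obtain ⟨q, hq1, hq2⟩ := exists_rat_admissible x.2 ha (half_pos hε)
    obtain ⟨m, hm, hqm⟩ := hx ⟨⟨n, q⟩, k⟩ hq1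
    refine ⟨m, hm, fun i => ?_⟩
    have h1 := hqm i
    have h2 := hq2 i
    have hk' : ((k:ℝ)+1)⁻¹ < ε/2 := by
      rw [← one_div]
      exact_mod_cast hk
    calc |x.1 ↑i m - a i| = |(x.1 ↑i m - (q i : ℝ)) + ((q i : ℝ) - a i)| := by ring_nf
      _ ≤ |x.1 ↑i m - (q i : ℝ)| + |(q i : ℝ) - a i| := abs_add_le _ _
      _ < ε/2 + ε/2 := add_lt_add (h1.trans hk') h2
      _ = ε := add_halves ε

lemma univSet_isGδ : IsGδ UnivSet := by
  rw [univSet_eq]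
  exact IsGδ.iInter fun p => (isOpen_GSet p.1.1 p.1.2 p.2).isGδ

/-! ### Katetov one-point extension -/

/-- Conditions for a valid one-point extension function. -/
def IsKatetov (d : ℕ → ℕ → ℝ) (f : ℕ → ℝ) : Prop :=
  (∀ p q, |f p - f q| ≤ d p q) ∧ (∀ p q, d p q ≤ f p + f q) ∧ (∀ p, 0 ≤ f p)

/-- The Katetov extension function determined by an admissible vector. -/
noncomputable def katetovExt (d : ℕ → ℕ → ℝ) {n : ℕ} (a : Fin n → ℝ) (p : ℕ) : ℝ :=
  if h : 0 < n then
    haveI : Nonempty (Fin n) := Fin.pos_iff_nonempty.mp h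
    Finset.univ.inf' Finset.univ_nonempty (fun i : Fin n => a i + d ↑i p)
  else 0

lemma katetovExt_spec {d : ℕ → ℕ → ℝ} (hd : IsInfDistMatrix d) {n : ℕ} (hn : 0 < n)
    {a : Fin n → ℝ}
    (ha : ∀ i j : Fin n, |a i - a j| ≤ d ↑i ↑j ∧ d ↑i ↑j ≤ a i + a j) :
    IsKatetov d (katetovExt d a) ∧ ∀ i : Fin n, katetovExt d a ↑i = a i := by
  haveI : Nonempty (Fin n) := Fin.pos_iff_nonempty.mp hn
  obtain ⟨hd0, hdnn, hdsym, hdtri⟩ := hd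
  have hkdef : ∀ p, katetovExt d a p
      = Finset.univ.inf' Finset.univ_nonempty (fun i : Fin n => a i + d ↑i p) := fun p => by
    simp [katetovExt, hn]
  have kle : ∀ (p : ℕ) (i : Fin n), katetovExt d a p ≤ a i + d ↑i p := fun p i => by
    rw [hkdef]
    exact Finset.inf'_le _ (Finset.mem_univ i)
  have kge : ∀ (p : ℕ) (c : ℝ), (∀ i : Fin n, c ≤ a i + d ↑i p) → c ≤ katetovExt d a p := by
    intro p c hc
    rw [hkdef]
    exact Finset.le_inf' _ _ fun i _ => hc i
  have kex : ∀ p : ℕ, ∃ i : Fin n, katetovExt d a p = a i + d ↑i p := by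
    intro p
    rw [hkdef]
    obtain ⟨i, _, hi⟩ := Finset.exists_mem_eq_inf' Finset.univ_nonempty
      (fun i : Fin n => a i + d ↑i p)
    exact ⟨i, hi⟩
  have hann : ∀ i : Fin n, 0 ≤ a i := fun i => by
    have h2 := (ha i i).2
    rw [hd0] at h2
    linarith
  have hle1 : ∀ p q, katetovExt d a p ≤ katetovExt d a q + d p q := by
    intro p q
    obtain ⟨i, hi⟩ := kex q
    calc katetovExt d a p ≤ a i + d ↑i p := kle p i
      _ ≤ a i + (d ↑i q + d q p) := by
          have := hdtri ↑i q p
          linarith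
      _ = katetovExt d a q + d q p := by rw [hi]; ring
      _ = katetovExt d a q + d p q := by rw [hdsym q p]
  have hLip : ∀ p q, |katetovExt d a p - katetovExt d a q| ≤ d p q := by
    intro p q
    rw [abs_sub_le_iff]
    constructor
    · linarith [hle1 p q]
    · have := hle1 q p
      rw [hdsym q p] at this
      linarith
  have hLow : ∀ p q, d p q ≤ katetovExt d a p + katetovExt d a q := by
    intro p q
    obtain ⟨i, hi⟩ := kex p
    obtain ⟨j, hj⟩ := kex q
    have h1 : d p q ≤ d p ↑i + d ↑i ↑j + d ↑j q := by
      have t1 := hdtri p ↑i q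
      have t2 := hdtri ↑i ↑j q
      linarith
    have h2 : d ↑i ↑j ≤ a i + a j := (ha i j).2
    have e1 : d p ↑i = d ↑i p := hdsym p ↑i
    have e2 : d ↑j q = d ↑j q := rfl
    rw [hi, hj]
    linarith
  have hnn : ∀ p, 0 ≤ katetovExt d a p := by
    intro p
    have h1 : d p p ≤ katetovExt d a p + katetovExt d a p := hLow p p
    rw [hd0] at h1
    linarith
  refine ⟨⟨hLip, hLow, hnn⟩, fun i => ?_⟩
  refine le_antisymm ?_ ?_
  · have := kle ↑i i
    rw [hd0] at this
    linarith
  · refine kge ↑i (a i) fun j => ?_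
    have h1 := (ha i j).1
    have h2 : a i - a j ≤ d ↑i ↑j := (abs_sub_le_iff.mp h1).1
    rw [hdsym ↑i ↑j] at h2
    linarith

/-! ### Inserting a point into an infinite distance matrix -/

/-- Reindexing map: the old index corresponding to a new index. -/
def oldIdx (m i : ℕ) : ℕ := if i < m then i else i - 1

/-- Insert a new point at index `m`, with distances to the old points given by `f`. -/
def insertPoint (d : ℕ → ℕ → ℝ) (m : ℕ) (f : ℕ → ℝ) (i j : ℕ) : ℝ :=
  if i = m then (if j = m then 0 else f (oldIdx m j))
  else if j = m then f (oldIdx m i)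
  else d (oldIdx m i) (oldIdx m j)

lemma insertPoint_isInfDistMatrix {d : ℕ → ℕ → ℝ} {f : ℕ → ℝ} (m : ℕ)
    (hd : IsInfDistMatrix d) (hf : IsKatetov d f) :
    IsInfDistMatrix (insertPoint d m f) := by
  obtain ⟨hd0, hdnn, hdsym, hdtri⟩ := hd
  obtain ⟨hLip, hLow, hfnn⟩ := hf
  have hfle : ∀ p q, f p - f q ≤ d p q := fun p q => (abs_sub_le_iff.mp (hLip p q)).1
  refine ⟨?_, ?_, ?_, ?_⟩
  · intro i
    by_cases hi : i = m <;> simp [insertPoint, hi, hd0]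
  · intro i j
    by_cases hi : i = m <;> by_cases hj : j = m <;>
      simp [insertPoint, hi, hj, hd0, hdnn, hfnn]
  · intro i j
    by_cases hi : i = m <;> by_cases hj : j = m <;>
      simp [insertPoint, hi, hj, hdsym (oldIdx m i) (oldIdx m j)]
  · intro i j k
    by_cases hi : i = m <;> by_cases hj : j = m <;> by_cases hk : k = m <;>
      simp only [insertPoint, hi, hj, hk, if_pos rfl, if_neg, if_true] <;>
      simp [insertPoint, hi, hj, hk]
    · linarith [hfnn (oldIdx m j)]
    · have h1 := hfle (oldIdx m k) (oldIdx m j)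
      have h2 := hdsym (oldIdx m k) (oldIdx m j)
      linarith
    · linarith [hfnn (oldIdx m i), hfnn (oldIdx m k), hLow (oldIdx m i) (oldIdx m k)]
    · have h1 := hfle (oldIdx m i) (oldIdx m j)
      linarith
    · exact hdtri _ _ _

lemma insertPoint_lt {d : ℕ → ℕ → ℝ} {f : ℕ → ℝ} {m i j : ℕ} (hi : i < m) (hj : j < m) :
    insertPoint d m f i j = d i j := by
  simp [insertPoint, hi.ne, hj.ne, oldIdx, hi, hj]

lemma insertPoint_new {d : ℕ → ℕ → ℝ} {f : ℕ → ℝ} {m i : ℕ} (hi : i < m) :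
    insertPoint d m f i m = f i := by
  simp [insertPoint, hi.ne, oldIdx, hi]

/-! ### The iterative construction -/

/-- Admissibility condition used at each step of the construction. -/
def AdmCond (d : ℕ → ℕ → ℝ) (m : ℕ) (σ : Σ n : ℕ, Fin n → ℚ) : Prop :=
  0 < σ.1 ∧ σ.1 ≤ m ∧
    ∀ i j : Fin σ.1, |(σ.2 i : ℝ) - (σ.2 j : ℝ)| ≤ d ↑i ↑j ∧ d ↑i ↑j ≤ (σ.2 i : ℝ) + (σ.2 j : ℝ)

open Classical in
/-- One step of the construction: insert a new point at index `m` realizing the vector `σ`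
if it is admissible, otherwise do nothing. -/
noncomputable def nextMat (d : ℕ → ℕ → ℝ) (m : ℕ) (σ : Σ n : ℕ, Fin n → ℚ) : ℕ → ℕ → ℝ :=
  if h : AdmCond d m σ
  then insertPoint d m (katetovExt d (fun i => (σ.2 i : ℝ)))
  else d

lemma nextMat_isInfDistMatrix {d : ℕ → ℕ → ℝ} (m : ℕ) (σ : Σ n : ℕ, Fin n → ℚ)
    (hd : IsInfDistMatrix d) : IsInfDistMatrix (nextMat d m σ) := by
  rw [nextMat]
  split
  · next h =>
    exact insertPoint_isInfDistMatrix m hd (katetovExt_spec hd h.1 h.2.2).1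
  · exact hd

lemma nextMat_lt {d : ℕ → ℕ → ℝ} {m : ℕ} {σ : Σ n : ℕ, Fin n → ℚ} {i j : ℕ}
    (hi : i < m) (hj : j < m) : nextMat d m σ i j = d i j := by
  rw [nextMat]
  split
  · exact insertPoint_lt hi hj
  · rfl

lemma nextMat_real {d : ℕ → ℕ → ℝ} {m : ℕ} {σ : Σ n : ℕ, Fin n → ℚ}
    (hd : IsInfDistMatrix d) {n : ℕ} {q : Fin n → ℚ} (hσ : σ = ⟨n, q⟩)
    (hc : AdmCond d m σ) :
    ∀ i : Fin n, nextMat d m σ ↑i m = (q i : ℝ) := by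
  subst hσ
  intro i
  rw [nextMat, dif_pos hc]
  have hi : (i : ℕ) < m := lt_of_lt_of_le i.isLt hc.2.1
  rw [insertPoint_new hi]
  exact (katetovExt_spec hd hc.1 hc.2.2).2 i

/-- The whole iterative construction. -/
noncomputable def stage (r : ℕ → ℕ → ℝ) (N : ℕ) (e : ℕ → Σ n : ℕ, Fin n → ℚ) :
    ℕ → ℕ → ℕ → ℝ
  | 0 => r
  | k + 1 => nextMat (stage r N e k) (N + k) (e (Nat.unpair k).1)

lemma stage_isInfDistMatrix {r : ℕ → ℕ → ℝ} (hr : IsInfDistMatrix r) (N : ℕ)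
    (e : ℕ → Σ n : ℕ, Fin n → ℚ) : ∀ k, IsInfDistMatrix (stage r N e k)
  | 0 => hr
  | k + 1 => nextMat_isInfDistMatrix _ _ (stage_isInfDistMatrix hr N e k)

lemma stage_stable {r : ℕ → ℕ → ℝ} {N : ℕ} {e : ℕ → Σ n : ℕ, Fin n → ℚ}
    {k l : ℕ} (hkl : k ≤ l) {i j : ℕ} (hi : i < N + k) (hj : j < N + k) :
    stage r N e l i j = stage r N e k i j := by
  induction l, hkl using Nat.le_induction with
  | base => rfl
  | succ l hkl ih =>
    rw [stage, nextMat_lt (lt_of_lt_of_le hi (by omega)) (lt_of_lt_of_le hj (by omega))]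
    exact ih

/-- The limit matrix of the construction. -/
noncomputable def limitMat (r : ℕ → ℕ → ℝ) (N : ℕ) (e : ℕ → Σ n : ℕ, Fin n → ℚ)
    (i j : ℕ) : ℝ :=
  stage r N e (max i j + 1) i j

lemma limitMat_eq_stage {r : ℕ → ℕ → ℝ} {N : ℕ} {e : ℕ → Σ n : ℕ, Fin n → ℚ}
    {k i j : ℕ} (hi : i < N + k) (hj : j < N + k) :
    limitMat r N e i j = stage r N e k i j := by
  have h1 : i < N + (max i j + 1) := by omega
  have h2 : j < N + (max i j + 1) := by omega
  rw [limitMat, ← stage_stable (le_max_left (max i j + 1) k) h1 h2,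
    ← stage_stable (le_max_right (max i j + 1) k) hi hj]

lemma limitMat_isInfDistMatrix {r : ℕ → ℕ → ℝ} (hr : IsInfDistMatrix r) (N : ℕ)
    (e : ℕ → Σ n : ℕ, Fin n → ℚ) : IsInfDistMatrix (limitMat r N e) := by
  refine ⟨?_, ?_, ?_, ?_⟩
  · intro i
    rw [limitMat_eq_stage (k := i + 1) (by omega) (by omega)]
    exact (stage_isInfDistMatrix hr N e (i+1)).1 i
  · intro i j
    rw [limitMat_eq_stage (k := i + j + 1) (by omega) (by omega)]
    exact (stage_isInfDistMatrix hr N e (i+j+1)).2.1 i j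
  · intro i j
    rw [limitMat_eq_stage (k := i + j + 1) (by omega) (by omega),
      limitMat_eq_stage (k := i + j + 1) (by omega) (by omega)]
    exact (stage_isInfDistMatrix hr N e (i+j+1)).2.2.1 i j
  · intro i j k
    rw [limitMat_eq_stage (k := i + j + k + 1) (by omega) (by omega),
      limitMat_eq_stage (k := i + j + k + 1) (by omega) (by omega),
      limitMat_eq_stage (k := i + j + k + 1) (by omega) (by omega)]
    exact (stage_isInfDistMatrix hr N e (i+j+k+1)).2.2.2 i j k

lemma limitMat_agree {r : ℕ → ℕ → ℝ} {N : ℕ} {e : ℕ → Σ n : ℕ, Fin n → ℚ}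
    {i j : ℕ} (hi : i < N) (hj : j < N) : limitMat r N e i j = r i j :=
  limitMat_eq_stage (k := 0) (by omega) (by omega)

lemma limitMat_universal {r : ℕ → ℕ → ℝ} (hr : IsInfDistMatrix r) (N : ℕ)
    {e : ℕ → Σ n : ℕ, Fin n → ℚ} (he : Function.Surjective e) :
    IsUniversal (limitMat r N e) := by
  intro n a ha ε hε
  rcases Nat.eq_zero_or_pos n with hn | hn
  · subst hn
    exact ⟨0, le_refl 0, fun i => i.elim0⟩
  have hlim := limitMat_isInfDistMatrix hr N e
  obtain ⟨q, hq1, hq2⟩ := exists_rat_admissible hlim ha hε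
  obtain ⟨j0, hj0⟩ := he ⟨n, q⟩
  set k := Nat.pair j0 n with hk
  have hkn : n ≤ k := Nat.right_le_pair j0 n
  have hunpair : (Nat.unpair k).1 = j0 := by rw [hk, Nat.unpair_pair]
  have hσ : e (Nat.unpair k).1 = ⟨n, q⟩ := by rw [hunpair, hj0]
  have hqk : ∀ i j : Fin n,
      |(q i : ℝ) - (q j : ℝ)| ≤ stage r N e k ↑i ↑j ∧
      stage r N e k ↑i ↑j ≤ (q i : ℝ) + (q j : ℝ) := by
    intro i j
    have hi : (i : ℕ) < N + k := by have := i.isLt; omega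
    have hj : (j : ℕ) < N + k := by have := j.isLt; omega
    rw [← limitMat_eq_stage hi hj]
    exact hq1 i j
  have hcond : AdmCond (stage r N e k) (N + k) (e (Nat.unpair k).1) := by
    rw [hσ]
    exact ⟨hn, show n ≤ N + k by omega, hqk⟩
  refine ⟨N + k, by omega, fun i => ?_⟩
  have hiLt := i.isLt
  have hreal : stage r N e (k + 1) ↑i (N + k) = (q i : ℝ) := by
    rw [stage]
    exact nextMat_real (stage_isInfDistMatrix hr N e k) hσ hcond i
  have hlim_eq : limitMat r N e ↑i (N + k) = stage r N e (k + 1) ↑i (N + k) :=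
    limitMat_eq_stage (by omega) (by omega)

  rw [hlim_eq, hreal]
  exact hq2 i

/-! ### Density of universal matrices in the cone -/

lemma univSet_dense : Dense UnivSet := by
  haveI : Nonempty (Σ n : ℕ, Fin n → ℚ) := ⟨⟨0, finZeroElim⟩⟩
  obtain ⟨e, he⟩ := exists_surjective_nat (Σ n : ℕ, Fin n → ℚ)
  intro x
  set y : ℕ → ConeR := fun N => ⟨limitMat x.1 N e, limitMat_isInfDistMatrix x.2 N e⟩ with hy
  have hyU : ∀ N, y N ∈ UnivSet := fun N => limitMat_universal x.2 N he
  have hty : Filter.Tendsto y Filter.atTop (nhds x) := by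
    rw [Topology.IsEmbedding.subtypeVal.tendsto_nhds_iff]
    rw [tendsto_pi_nhds]
    intro i
    rw [tendsto_pi_nhds]
    intro j
    have hev : ∀ᶠ N in Filter.atTop, ((y N : ℕ → ℕ → ℝ)) i j = x.1 i j := by
      rw [Filter.eventually_atTop]
      exact ⟨max i j + 1, fun N hN => limitMat_agree (by omega) (by omega)⟩
    exact Filter.Tendsto.congr' (Filter.EventuallyEq.symm hev) tendsto_const_nhds
  exact mem_closure_of_tendsto hty (Filter.Eventually.of_forall hyU)

/-! ### Main theorem -/

/-- In the space of Borel probability measures on the cone `R` of infinite distance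
matrices, with the topology of weak convergence, the measures giving full mass to the
set `M` of universal matrices form an everywhere dense `G_δ` set; hence for the generic
probability measure `ν` on `R`, `ν`-almost every distance matrix is universal. -/
theorem generic_measure_ae_universal :
    Dense {μ : ProbabilityMeasure ConeR | μ.toMeasure UnivSet = 1} ∧
    IsGδ {μ : ProbabilityMeasure ConeR | μ.toMeasure UnivSet = 1} := by
  letI : PseudoMetricSpace ConeR := TopologicalSpace.pseudoMetrizableSpacePseudoMetric ConeR
  constructor
  · exact dense_fullMeasure univSet_isGδ.measurableSet univSet_dense
  · have heq : {μ : ProbabilityMeasure ConeR | μ.toMeasure UnivSet = 1}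
        = {μ : ProbabilityMeasure ConeR |
            μ.toMeasure (⋂ p : (Σ n : ℕ, Fin n → ℚ) × ℕ, GSet p.1.1 p.1.2 p.2) = 1} := by
      rw [← univSet_eq]
    rw [heq]
    exact isGδ_fullMeasure_iInter _ fun p => isOpen_GSet p.1.1 p.1.2 p.2
end
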